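/- arXiv:2001.00742 — 9 statements merged into one kernel-verified Lean document; each statement's English description precedes it below -/
import Mathlib

section
/- For integers b ≥ 3 and n ≥ 2^b, the sum of binomial coefficients C(n, j) for j = 0 to ⌊n/2^b⌋ is at most 2^(n−b). -/
/-!
Chernoff's bound: for `0 < x ≤ 1`, `x ^ m * ∑_{j ≤ m} C(n, j) ≤ ∑_j C(n, j) x ^ j = (1 + x) ^ n ≤ e ^ (n x)`.
With `x = 2⁻ᵇ` and `m = ⌊n / 2ᵇ⌋` the sum is at most `2 ^ (b m) e ^ (n / 2ᵇ)`. Taking logarithms, this is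
at most `2 ^ (n - b)` because `m ≤ n / 2ᵇ`, `b ≤ b n / 2ᵇ` and `(2ᵇ - 2 b) log 2 ≥ 2 log 2 ≥ 1` for `b ≥ 3`.
-/

open Finset Real

section ChooseSum

variable {R : Type*} [CommSemiring R] [PartialOrder R] [IsOrderedRing R] {x : R}

theorem sum_range_choose_mul_pow_le_one_add_pow (hx : 0 ≤ x) (n m : ℕ) :
    ∑ j ∈ range (m + 1), (n.choose j : R) * x ^ j ≤ (1 + x) ^ n := by
  have hsub : range (n + 1) ⊆ range (max m n + 1) := by gcongr; exact le_max_right m n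
  have hvanish : ∀ j ∈ range (max m n + 1), j ∉ range (n + 1) →
      (n.choose j : R) * x ^ j = 0 := by
    intro j _ hj
    rw [Nat.choose_eq_zero_of_lt (by simpa using hj), Nat.cast_zero, zero_mul]
  calc ∑ j ∈ range (m + 1), (n.choose j : R) * x ^ j
      ≤ ∑ j ∈ range (max m n + 1), (n.choose j : R) * x ^ j :=
        sum_le_sum_of_subset_of_nonneg (by gcongr; exact le_max_left m n)
          (fun _ _ _ => by positivity)
    _ = ∑ j ∈ range (n + 1), (n.choose j : R) * x ^ j := (sum_subset hsub hvanish).symm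
    _ = (1 + x) ^ n := by
        rw [add_comm 1 x, add_pow]
        exact sum_congr rfl fun j _ => by rw [one_pow, mul_one, mul_comm]

theorem sum_range_choose_mul_pow_le_one_add_pow_of_le_one (hx₀ : 0 ≤ x) (hx₁ : x ≤ 1)
    (n m : ℕ) : (∑ j ∈ range (m + 1), (n.choose j : R)) * x ^ m ≤ (1 + x) ^ n := by
  rw [sum_mul]
  refine (sum_le_sum fun j hj => ?_).trans (sum_range_choose_mul_pow_le_one_add_pow hx₀ n m)
  exact mul_le_mul_of_nonneg_left
    (pow_le_pow_of_le_one hx₀ hx₁ (Nat.lt_succ_iff.mp (mem_range.mp hj))) (Nat.cast_nonneg _)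

end ChooseSum

theorem one_add_pow_le_exp_mul {x : ℝ} (hx : -1 ≤ x) (n : ℕ) : (1 + x) ^ n ≤ exp (n * x) := by
  rw [exp_nat_mul, add_comm]
  exact pow_le_pow_left₀ (by linarith) (add_one_le_exp x) n

theorem pow_eq_exp_mul_log {x : ℝ} (hx : 0 < x) (k : ℕ) : x ^ k = exp (k * log x) := by
  rw [exp_nat_mul, exp_log hx]

theorem two_mul_add_two_le_two_pow {b : ℕ} (hb : 3 ≤ b) : 2 * b + 2 ≤ 2 ^ b := by
  induction b, hb using Nat.le_induction with
  | base => norm_num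
  | succ b _ ih => rw [pow_succ]; omega

theorem two_pow_pow_mul_exp_le_two_pow_sub {b m n : ℕ} (hb : 3 ≤ b) (hm : 2 ^ b * m ≤ n)
    (hn : 2 ^ b ≤ n) : ((2 : ℝ) ^ b) ^ m * exp (n / 2 ^ b) ≤ 2 ^ (n - b) := by
  have hbn : b ≤ n := Nat.lt_two_pow_self.le.trans hn
  have hB : (2 * b + 2 : ℝ) ≤ 2 ^ b := by exact_mod_cast two_mul_add_two_le_two_pow hb
  have hm' : (2 : ℝ) ^ b * m ≤ n := by exact_mod_cast hm
  have hn' : (2 : ℝ) ^ b ≤ n := by exact_mod_cast hn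
  have hlog : 1 ≤ log 2 * (2 ^ b - 2 * b) := by nlinarith [log_two_gt_d9]
  rw [← pow_mul, pow_eq_exp_mul_log two_pos (b * m), pow_eq_exp_mul_log two_pos (n - b),
    ← exp_add, exp_le_exp, Nat.cast_sub hbn, ← sub_nonneg]
  have hsplit : ((n : ℝ) - b) * log 2 - ((b * m : ℕ) * log 2 + n / 2 ^ b) =
      (n * (log 2 * (2 ^ b - 2 * b) - 1) + b * log 2 * ((n - 2 ^ b * m) + (n - 2 ^ b))) /
        2 ^ b := by
    field_simp
    push_cast
    ring
  rw [hsplit]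
  have hbL : 0 ≤ (b : ℝ) * log 2 := mul_nonneg (Nat.cast_nonneg b) (log_nonneg one_le_two)
  exact div_nonneg (add_nonneg (mul_nonneg (Nat.cast_nonneg n) (by linarith))
    (mul_nonneg hbL (by linarith))) (by positivity)

theorem binomial_approx (b n : ℕ) (hb : 3 ≤ b) (hn : 2 ^ b ≤ n) :
    ∑ j ∈ Finset.range (n / 2 ^ b + 1), n.choose j ≤ 2 ^ (n - b) := by
  set m := n / 2 ^ b
  have hx : (0 : ℝ) < ((2 : ℝ) ^ b)⁻¹ := by positivity
  have hchernoff :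
      (∑ j ∈ range (m + 1), (n.choose j : ℝ)) * ((2 : ℝ) ^ b)⁻¹ ^ m ≤ exp (n / 2 ^ b) :=
    calc _ ≤ (1 + ((2 : ℝ) ^ b)⁻¹) ^ n :=
          sum_range_choose_mul_pow_le_one_add_pow_of_le_one hx.le
            (inv_le_one_of_one_le₀ (one_le_pow₀ one_le_two)) n m
      _ ≤ exp (n / 2 ^ b) := by
          rw [div_eq_mul_inv]
          exact one_add_pow_le_exp_mul (by linarith) n
  rw [inv_pow, mul_inv_le_iff₀ (by positivity), mul_comm] at hchernoff
  exact_mod_cast hchernoff.trans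
    (two_pow_pow_mul_exp_le_two_pow_sub hb (Nat.mul_div_le n (2 ^ b)) hn)
end

section
/- Let Ω be a finite set, B a finite set (of information resources), and for i = 1, 2 let P_i : B → (probability distributions on Ω) be arbitrary functions. Let τ be a collection of subsets of Ω that is closed under permutations of Ω (i.e., for every bijection σ of Ω and every t ∈ τ, σ(t) ∈ τ). Define φ_i(t, f) = ∑_{ω ∈ t} P_i(f)(ω). Then ∑_{t ∈ τ} ∑_{f ∈ B} φ_1(t, f) = ∑_{t ∈ τ} ∑_{f ∈ B} φ_2(t, f). -/
lemma nfl_count_const {Ω : Type*} [Fintype Ω] [DecidableEq Ω]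
    (τ : Finset (Finset Ω))
    (hτ : ∀ σ : Equiv.Perm Ω, ∀ t ∈ τ, t.image σ ∈ τ) (ω ω' : Ω) :
    (τ.filter (fun t => ω ∈ t)).card = (τ.filter (fun t => ω' ∈ t)).card := by
  apply Finset.card_bij (fun t _ => t.image (Equiv.swap ω ω'))
  · intro t ht
    simp only [Finset.mem_filter] at ht ⊢
    exact ⟨hτ _ _ ht.1, Finset.mem_image.mpr ⟨ω, ht.2, Equiv.swap_apply_left ω ω'⟩⟩
  · intro a ha b hb h
    exact Finset.image_injective (Equiv.injective _) h
  · intro t' ht'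
    simp only [Finset.mem_filter] at ht'
    refine ⟨t'.image (Equiv.swap ω ω'), Finset.mem_filter.mpr
      ⟨hτ _ _ ht'.1, Finset.mem_image.mpr ⟨ω', ht'.2, Equiv.swap_apply_right ω ω'⟩⟩, ?_⟩
    rw [Finset.image_image]
    simp [Function.comp_def]

lemma nfl_sum {Ω : Type*} [Fintype Ω] [DecidableEq Ω]
    (τ : Finset (Finset Ω))
    (hτ : ∀ σ : Equiv.Perm Ω, ∀ t ∈ τ, t.image σ ∈ τ)
    (P : Ω → ℝ) (hP : ∑ ω, P ω = 1) (ω₀ : Ω) :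
    ∑ t ∈ τ, ∑ ω ∈ t, P ω = (τ.filter (fun t => ω₀ ∈ t)).card := by
  have : ∀ t ∈ τ, ∑ ω ∈ t, P ω = ∑ ω : Ω, if ω ∈ t then P ω else 0 := by
    intro t _
    rw [Finset.sum_ite_mem, Finset.univ_inter]
  rw [Finset.sum_congr rfl this, Finset.sum_comm]
  have : ∀ ω : Ω, ∑ t ∈ τ, (if ω ∈ t then P ω else 0)
      = ((τ.filter (fun t => ω₀ ∈ t)).card : ℝ) * P ω := by
    intro ω
    rw [Finset.sum_ite, Finset.sum_const_zero, add_zero, Finset.sum_const, nfl_count_const τ hτ ω₀ ω, nsmul_eq_mul]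
  rw [Finset.sum_congr rfl (fun ω _ => this ω), ← Finset.mul_sum, hP, mul_one]

theorem no_free_lunch {Ω B : Type*} [Fintype Ω] [DecidableEq Ω] [Fintype B]
    (P₁ P₂ : B → Ω → ℝ)
    (hP₁ : ∀ f, (∀ ω, 0 ≤ P₁ f ω) ∧ ∑ ω, P₁ f ω = 1)
    (hP₂ : ∀ f, (∀ ω, 0 ≤ P₂ f ω) ∧ ∑ ω, P₂ f ω = 1)
    (τ : Finset (Finset Ω))
    (hτ : ∀ σ : Equiv.Perm Ω, ∀ t ∈ τ, t.image σ ∈ τ) :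
    ∑ t ∈ τ, ∑ f : B, ∑ ω ∈ t, P₁ f ω = ∑ t ∈ τ, ∑ f : B, ∑ ω ∈ t, P₂ f ω := by
  rcases isEmpty_or_nonempty Ω with hΩ | ⟨⟨ω₀⟩⟩
  · have : ∀ (P : B → Ω → ℝ) (t : Finset Ω) (f : B), ∑ ω ∈ t, P f ω = 0 := by
      intro P t f
      have : t = ∅ := Finset.eq_empty_of_isEmpty t
      simp [this]
    simp [this]
  · rw [Finset.sum_comm, Finset.sum_comm (s := τ)]
    refine Finset.sum_congr rfl fun f _ => ?_
    rw [nfl_sum τ hτ (P₁ f) (hP₁ f).2 ω₀, nfl_sum τ hτ (P₂ f) (hP₂ f).2 ω₀]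
end

section
/- Let Ω be a finite set of size n, fix k with 1 ≤ k ≤ n, and let P be a probability distribution on Ω. For q_min ∈ (0,1], the number of k-element subsets T ⊆ Ω with ∑_{ω∈T} P(ω) ≥ q_min, divided by C(n,k), is at most (k/n)/q_min. -/
/-! Summing the mass `∑ ω ∈ T, P ω` over all `k`-subsets `T` counts each `ω` exactly
`C(n-1, k-1)` times, so the total is `C(n-1, k-1) = (k/n) C(n,k)`. Each favorable target contributes
at least `qmin` to this total and no target contributes a negative amount, so there are at most
`(k/n) C(n,k) / qmin` favorable targets. -/

lemma Nat.mul_choose_sub_one {k : ℕ} (hk : 1 ≤ k) (n : ℕ) :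
    n * (n - 1).choose (k - 1) = n.choose k * k := by
  obtain ⟨j, rfl⟩ := Nat.exists_eq_add_of_le' hk
  cases n with
  | zero => simp
  | succ m => exact Nat.add_one_mul_choose_eq m j

namespace Finset

variable {α : Type*} [DecidableEq α]

lemma card_filter_mem_powersetCard {s : Finset α} {a : α} (ha : a ∈ s) {k : ℕ} (hk : 1 ≤ k) :
    #{T ∈ s.powersetCard k | a ∈ T} = (#s - 1).choose (k - 1) := by
  simpa only [singleton_subset_iff, card_singleton] using
    card_filter_powersetCard_subset {a} s k (singleton_subset_iff.2 ha) hk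

lemma sum_powersetCard_sum {M : Type*} [AddCommMonoid M] (s : Finset α) {k : ℕ} (hk : 1 ≤ k)
    (f : α → M) :
    ∑ T ∈ s.powersetCard k, ∑ x ∈ T, f x = (#s - 1).choose (k - 1) • ∑ x ∈ s, f x := by
  rw [sum_comm' (t' := s) (s' := fun x => {T ∈ s.powersetCard k | x ∈ T}) fun T x => by
    simp only [mem_filter, mem_powersetCard]
    exact ⟨fun h => ⟨h, h.1.1 h.2⟩, And.left⟩]
  simp only [sum_const, smul_sum]
  exact sum_congr rfl fun x hx => by rw [card_filter_mem_powersetCard hx hk]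

lemma card_filter_le_nsmul_le_sum {ι M : Type*} [AddCommMonoid M] [PartialOrder M]
    [IsOrderedAddMonoid M] (s : Finset ι) (g : ι → M) (hg : ∀ i ∈ s, 0 ≤ g i) (q : M)
    [DecidablePred fun i => q ≤ g i] :
    #{i ∈ s | q ≤ g i} • q ≤ ∑ i ∈ s, g i :=
  calc #{i ∈ s | q ≤ g i} • q ≤ ∑ i ∈ s with q ≤ g i, g i :=
        card_nsmul_le_sum _ _ _ fun _ hi => (mem_filter.1 hi).2
    _ ≤ ∑ i ∈ s, g i := sum_le_sum_of_subset_of_nonneg (filter_subset _ _) fun i hi _ => hg i hi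

end Finset

open Finset in
theorem famine_of_favorable_targets_general {Ω : Type*} [Fintype Ω] [DecidableEq Ω]
    (n k : ℕ) (hn : Fintype.card Ω = n) (hk : 1 ≤ k) (hkn : k ≤ n)
    (P : Ω → ℝ) (hP : ∀ ω, 0 ≤ P ω) (hsum : ∑ ω, P ω = 1)
    (qmin : ℝ) (hq : 0 < qmin) :
    ((((Finset.univ : Finset Ω).powersetCard k).filter
        (fun T => qmin ≤ ∑ ω ∈ T, P ω)).card : ℝ) / (n.choose k : ℝ)
      ≤ ((k : ℝ) / n) / qmin := by
  have htotal : ∑ T ∈ (univ : Finset Ω).powersetCard k, ∑ ω ∈ T, P ω = (n - 1).choose (k - 1) := by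
    rw [sum_powersetCard_sum _ hk, card_univ, hn, hsum, nsmul_eq_mul, mul_one]
  have hmass := card_filter_le_nsmul_le_sum ((univ : Finset Ω).powersetCard k)
    (fun T => ∑ ω ∈ T, P ω) (fun T _ => sum_nonneg fun ω _ => hP ω) qmin
  rw [htotal, nsmul_eq_mul] at hmass
  have hchoose : (n : ℝ) * (n - 1).choose (k - 1) = n.choose k * k := by
    exact_mod_cast Nat.mul_choose_sub_one hk n
  have hchoose_pos : (0 : ℝ) < n.choose k := by exact_mod_cast Nat.choose_pos hkn
  have hn_pos : (0 : ℝ) < n := by exact_mod_cast hk.trans hkn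
  rw [div_le_div_iff₀ hchoose_pos hq, div_mul_eq_mul_div, le_div_iff₀ hn_pos]
  calc _ ≤ ((n - 1).choose (k - 1) : ℝ) * n := by gcongr
    _ = _ := by linarith

open Finset in
theorem famine_of_favorable_targets {Ω : Type*} [Fintype Ω] [DecidableEq Ω]
    (n k : ℕ) (hn : Fintype.card Ω = n) (hk : 1 ≤ k) (hkn : k ≤ n)
    (P : Ω → ℝ) (hP : ∀ ω, 0 ≤ P ω) (hsum : ∑ ω, P ω = 1)
    (qmin : ℝ) (hq : 0 < qmin) (hq1 : qmin ≤ 1) :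
    ((((Finset.univ : Finset Ω).powersetCard k).filter
        (fun T => qmin ≤ ∑ ω ∈ T, P ω)).card : ℝ) / (n.choose k : ℝ)
      ≤ ((k : ℝ) / n) / qmin :=
  famine_of_favorable_targets_general n k hn hk hkn P hP hsum qmin hq
end

section
/- Let Ω be a finite set of size n, fix k with 1 ≤ k ≤ n, let B be a finite nonempty set, and let P : B → (probability distributions on Ω). Define R as the set of pairs (T, f) with T a k-element subset of Ω and f ∈ B, and R_q as the subset of pairs with ∑_{ω∈T} P(f)(ω) ≥ q_min, for q_min ∈ (0,1]. Then |R_q|/|R| ≤ (k/n)/q_min. -/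
open Finset

lemma count_containing {Ω : Type*} [Fintype Ω] [DecidableEq Ω] (k : ℕ) (hk : 1 ≤ k) (a : Ω) :
    (((univ : Finset Ω).powersetCard k).filter (fun T => a ∈ T)).card
      = (Fintype.card Ω - 1).choose (k - 1) := by
  have : (((univ : Finset Ω).powersetCard k).filter (fun T => a ∈ T)).card
      = (((univ : Finset Ω).erase a).powersetCard (k-1)).card := by
    apply Finset.card_bij (fun T _ => T.erase a)
    · intro T hT
      simp only [mem_filter, mem_powersetCard] at hT
      simp only [mem_powersetCard]
      refine ⟨fun x hx => ?_, ?_⟩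
      · simp only [mem_erase] at hx ⊢
        exact ⟨hx.1, mem_univ _⟩
      · rw [card_erase_of_mem hT.2, hT.1.2]
    · intro T₁ h₁ T₂ h₂ h
      simp only [mem_filter] at h₁ h₂
      rw [← insert_erase h₁.2, ← insert_erase h₂.2, h]
    · intro T hT
      simp only [mem_powersetCard] at hT
      refine ⟨insert a T, ?_, ?_⟩
      · have ha : a ∉ T := fun h => (mem_erase.1 (hT.1 h)).1 rfl
        simp only [mem_filter, mem_powersetCard]
        refine ⟨⟨subset_univ _, ?_⟩, mem_insert_self _ _⟩
        rw [card_insert_of_notMem ha, hT.2]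
        omega
      · rw [erase_insert (fun h => (mem_erase.1 (hT.1 h)).1 rfl)]
  rw [this, card_powersetCard, card_erase_of_mem (mem_univ a), card_univ]

lemma sum_over_subsets {Ω : Type*} [Fintype Ω] [DecidableEq Ω] (k : ℕ) (hk : 1 ≤ k)
    (g : Ω → ℝ) :
    ∑ T ∈ (univ : Finset Ω).powersetCard k, ∑ ω ∈ T, g ω
      = ((Fintype.card Ω - 1).choose (k-1) : ℝ) * ∑ ω, g ω := by
  have : ∀ T ∈ (univ : Finset Ω).powersetCard k, ∑ ω ∈ T, g ω
      = ∑ ω ∈ univ, if ω ∈ T then g ω else 0 := by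
    intro T _
    rw [sum_ite_mem, univ_inter]
  rw [sum_congr rfl this, sum_comm]
  rw [Finset.mul_sum]
  refine sum_congr rfl fun ω _ => ?_
  rw [← sum_filter, sum_const, ← count_containing k hk ω]
  simp [nsmul_eq_mul]

open Finset in
theorem famine_of_forte {Ω B : Type*} [Fintype Ω] [DecidableEq Ω]
    [Fintype B] [DecidableEq B] [Nonempty B]
    (n k : ℕ) (hn : Fintype.card Ω = n) (hk : 1 ≤ k) (hkn : k ≤ n)
    (P : B → Ω → ℝ) (hP : ∀ f ω, 0 ≤ P f ω) (hsum : ∀ f, ∑ ω, P f ω = 1)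
    (qmin : ℝ) (hq : 0 < qmin) (hq1 : qmin ≤ 1) :
    (((((Finset.univ : Finset Ω).powersetCard k) ×ˢ (Finset.univ : Finset B)).filter
        (fun p => qmin ≤ ∑ ω ∈ p.1, P p.2 ω)).card : ℝ) /
      ((((Finset.univ : Finset Ω).powersetCard k) ×ˢ (Finset.univ : Finset B)).card : ℝ)
      ≤ ((k : ℝ) / n) / qmin := by
  set S := ((((Finset.univ : Finset Ω).powersetCard k) ×ˢ (Finset.univ : Finset B)).filter
        (fun p => qmin ≤ ∑ ω ∈ p.1, P p.2 ω)) with hS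
  have key : qmin * S.card ≤ (Fintype.card B : ℝ) * ((n-1).choose (k-1) : ℝ) := by
    calc qmin * S.card = ∑ _p ∈ S, qmin := by rw [sum_const, nsmul_eq_mul, mul_comm]
    _ ≤ ∑ p ∈ S, ∑ ω ∈ p.1, P p.2 ω := by
        refine sum_le_sum fun p hp => ?_
        exact (mem_filter.1 hp).2
    _ ≤ ∑ p ∈ ((univ : Finset Ω).powersetCard k) ×ˢ (univ : Finset B), ∑ ω ∈ p.1, P p.2 ω := by
        refine sum_le_sum_of_subset_of_nonneg (filter_subset _ _) fun p _ _ => ?_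
        exact sum_nonneg fun ω _ => hP _ _
    _ = ∑ f : B, ∑ T ∈ (univ : Finset Ω).powersetCard k, ∑ ω ∈ T, P f ω := by
        rw [Finset.sum_product]
        exact Finset.sum_comm
    _ = ∑ f : B, ((n-1).choose (k-1) : ℝ) := by
        refine sum_congr rfl fun f _ => ?_
        rw [sum_over_subsets k hk, hsum, hn, mul_one]
    _ = (Fintype.card B : ℝ) * ((n-1).choose (k-1) : ℝ) := by
        rw [sum_const, card_univ, nsmul_eq_mul]
  have hchoose : n * (n-1).choose (k-1) = n.choose k * k := by
    have h1 : n = (n-1) + 1 := by omega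
    have h2 : k = (k-1) + 1 := by omega
    rw [h1, h2]
    simp only [Nat.add_sub_cancel]
    exact Nat.add_one_mul_choose_eq (n-1) (k-1)
  have hNpos : (0:ℝ) < (n.choose k : ℝ) := by
    exact_mod_cast Nat.choose_pos hkn
  have hBpos : (0:ℝ) < (Fintype.card B : ℝ) := by
    exact_mod_cast Fintype.card_pos
  have hnpos : (0:ℝ) < (n:ℝ) := by
    have : 1 ≤ n := le_trans hk hkn
    exact_mod_cast lt_of_lt_of_le zero_lt_one (by exact_mod_cast this)
  rw [card_product, card_powersetCard, card_univ, card_univ, hn]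
  rw [div_div, div_le_div_iff₀ (by exact_mod_cast Nat.mul_pos (Nat.choose_pos hkn) Fintype.card_pos) (mul_pos hnpos hq)]
  push_cast
  have hc : ((n:ℝ)) * ((n-1).choose (k-1) : ℝ) = (n.choose k : ℝ) * k := by
    exact_mod_cast hchoose
  nlinarith [mul_le_mul_of_nonneg_left key hNpos.le, S.card.cast_nonneg (α := ℝ), hq.le]
end

section
/- Let B be a finite nonempty set, Ω a finite set, t ⊆ Ω a fixed subset of size k, and P : B → (probability distributions on Ω). Define φ(f) = ∑_{ω∈t} P(f)(ω), p = k/|Ω|, and Bias(B, t) = (1/|B|)∑_{f∈B} φ(f) − p. Then for any q_min ∈ (0,1], the fraction of f ∈ B with φ(f) ≥ q_min is at most (p + Bias(B, t))/q_min. -/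
open Finset in
theorem famine_of_favorable_information_resources {Ω B : Type*}
    [Fintype Ω] [DecidableEq Ω] [Fintype B] [DecidableEq B] [Nonempty B]
    (k : ℕ) (t : Finset Ω) (ht : t.card = k)
    (P : B → Ω → ℝ) (hP : ∀ f ω, 0 ≤ P f ω) (hsum : ∀ f, ∑ ω, P f ω = 1)
    (qmin : ℝ) (hq : 0 < qmin) (hq1 : qmin ≤ 1) :
    (((Finset.univ : Finset B).filter (fun f => qmin ≤ ∑ ω ∈ t, P f ω)).card : ℝ) /
        (Fintype.card B : ℝ)
      ≤ ((k : ℝ) / Fintype.card Ω +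
          ((1 / (Fintype.card B : ℝ)) * ∑ f : B, ∑ ω ∈ t, P f ω
            - (k : ℝ) / Fintype.card Ω)) / qmin := by
  have hB : (0 : ℝ) < Fintype.card B := by
    exact_mod_cast Fintype.card_pos
  set S := (Finset.univ : Finset B).filter (fun f => qmin ≤ ∑ ω ∈ t, P f ω) with hS
  have hmarkov : qmin * S.card ≤ ∑ f : B, ∑ ω ∈ t, P f ω := by
    calc qmin * S.card = ∑ _f ∈ S, qmin := by rw [Finset.sum_const, nsmul_eq_mul, mul_comm]
    _ ≤ ∑ f ∈ S, ∑ ω ∈ t, P f ω := by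
        apply Finset.sum_le_sum
        intro f hf
        exact (Finset.mem_filter.mp hf).2
    _ ≤ ∑ f : B, ∑ ω ∈ t, P f ω := by
        apply Finset.sum_le_sum_of_subset_of_nonneg (Finset.filter_subset _ _)
        intro f _ _
        exact Finset.sum_nonneg fun ω _ => hP f ω
  rw [div_le_div_iff₀ hB hq] at *
  have : ((k : ℝ) / Fintype.card Ω +
          ((1 / (Fintype.card B : ℝ)) * ∑ f : B, ∑ ω ∈ t, P f ω
            - (k : ℝ) / Fintype.card Ω)) = (1 / (Fintype.card B : ℝ)) * ∑ f : B, ∑ ω ∈ t, P f ω := by ring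
  rw [this]
  have hBne : (Fintype.card B : ℝ) ≠ 0 := ne_of_gt hB
  field_simp
  nlinarith [hmarkov]
end

section
/- Let B be a finite nonempty set, Ω a finite set, t ⊆ Ω with |t| = k, P : B → (probability distributions on Ω), and φ(f) = ∑_{ω∈t} P(f)(ω). Let 𝒫 be the simplex of probability distributions on B, with Bias(D, t) = ∑_f D(f)φ(f) − k/|Ω| for D ∈ 𝒫. Then for q_min ∈ (0,1], if D is drawn uniformly (with respect to Lebesgue measure on the simplex), μ({D ∈ 𝒫 : Bias(D,t) ≥ q_min}) / μ(𝒫) ≤ (k/|Ω| + Bias(B,t)) / q_min, where Bias(B,t) denotes the bias of the uniform distribution on B. -/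
/-!
Replacing coordinate `i` of `x` by the implicit coordinate `1 - ∑ j, x j` is an affine involution
of the corner simplex `{x | 0 ≤ x, ∑ x ≤ 1}` with linear part of determinant `-1`, so it
preserves Lebesgue measure. Hence all barycentric coordinates have the same integral over the
simplex: its centroid is the uniform distribution on `B`, and the expected success
`∑ f, D f * φ f` averages to `(1 / |B|) * ∑ f, φ f`. Markov's inequality for this nonnegative
function then bounds the fraction of the simplex where it, and a fortiori the bias, is at least
`qmin`.
-/

open MeasureTheory Matrix

theorem MeasureTheory.measure_le_ofReal_setIntegral_div {α : Type*} [MeasurableSpace α]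
    {μ : Measure α} {s : Set α} (hs : MeasurableSet s) {h : α → ℝ}
    (hint : IntegrableOn h s μ) (hnn : ∀ x ∈ s, 0 ≤ h x) {q : ℝ} (hq : 0 < q) :
    μ {x | x ∈ s ∧ q ≤ h x} ≤ ENNReal.ofReal ((∫ x in s, h x ∂μ) / q) := by
  have markov := mul_meas_ge_le_lintegral₀ hint.aemeasurable.ennreal_ofReal (ENNReal.ofReal q)
  rw [← ofReal_integral_eq_lintegral_ofReal hint (ae_restrict_of_forall_mem hs hnn)] at markov
  have hset :
      {x | ENNReal.ofReal q ≤ ENNReal.ofReal (h x)} ∩ s = {x | x ∈ s ∧ q ≤ h x} := by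
    ext x
    simp [ENNReal.ofReal_le_ofReal_iff', hq.not_ge, and_comm]
  rw [ENNReal.ofReal_div_of_pos hq, ENNReal.le_div_iff_mul_le (by simp [hq]) (by simp),
    mul_comm, ← hset]
  exact (mul_le_mul' le_rfl (Measure.le_restrict_apply _ _)).trans markov

theorem Matrix.measurePreserving_mulVec {ι : Type*} [Fintype ι] [DecidableEq ι]
    {M : Matrix ι ι ℝ} (hM : |M.det| = 1) :
    MeasurePreserving (M *ᵥ ·) volume volume := by
  have hmap := Real.map_matrix_volume_pi_eq_smul_volume_pi (M := M) (by aesop)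
  rw [show ⇑(toLin' M) = (M *ᵥ ·) from funext (toLin'_apply M)] at hmap
  exact ⟨(toLin' M).continuous_of_finiteDimensional.measurable, by simpa [hM] using hmap⟩

def cornerSimplex (ι : Type*) [Fintype ι] : Set (ι → ℝ) :=
  {x | (∀ i, 0 ≤ x i) ∧ ∑ i, x i ≤ 1}

section cornerSimplex

variable {ι : Type*} [Fintype ι]

theorem isClosed_cornerSimplex : IsClosed (cornerSimplex ι) := by
  simp only [cornerSimplex, Set.ofPred_and, Set.ofPred_forall]
  exact (isClosed_iInter fun i => isClosed_le continuous_const (continuous_apply i)).inter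
    (isClosed_le (continuous_finsetSum _ fun i _ => continuous_apply i) continuous_const)

theorem measurableSet_cornerSimplex : MeasurableSet (cornerSimplex ι) :=
  isClosed_cornerSimplex.measurableSet

theorem cornerSimplex_subset_pi_Icc :
    cornerSimplex ι ⊆ Set.univ.pi fun _ => Set.Icc (0 : ℝ) 1 :=
  fun _ hx i _ =>
    ⟨hx.1 i, (Finset.single_le_sum (fun j _ => hx.1 j) (Finset.mem_univ i)).trans hx.2⟩

theorem isCompact_cornerSimplex : IsCompact (cornerSimplex ι) :=
  (isCompact_univ_pi fun _ => isCompact_Icc).of_isClosed_subset isClosed_cornerSimplex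
    cornerSimplex_subset_pi_Icc

variable [DecidableEq ι]

def simplexReflection (i : ι) (x : ι → ℝ) : ι → ℝ :=
  Function.update x i (1 - ∑ j, x j)

theorem sum_simplexReflection (i : ι) (x : ι → ℝ) :
    ∑ j, simplexReflection i x j = 1 - x i := by
  rw [simplexReflection, Finset.sum_update_of_mem (Finset.mem_univ i),
    Finset.sdiff_singleton_eq_erase, Finset.sum_erase_eq_sub (Finset.mem_univ i)]
  ring

theorem simplexReflection_involutive (i : ι) : Function.Involutive (simplexReflection i) := by
  intro x
  ext j
  rcases eq_or_ne j i with rfl | hj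
  · rw [simplexReflection, sum_simplexReflection]
    simp [simplexReflection]
  · simp [simplexReflection, hj]

theorem mapsTo_simplexReflection (i : ι) :
    Set.MapsTo (simplexReflection i) (cornerSimplex ι) (cornerSimplex ι) := by
  rintro x ⟨hnn, hsum⟩
  refine ⟨fun j => ?_, by rw [sum_simplexReflection]; linarith [hnn i]⟩
  rcases eq_or_ne j i with rfl | hj
  · simpa [simplexReflection] using hsum
  · simpa [simplexReflection, hj] using hnn j

theorem preimage_simplexReflection_cornerSimplex (i : ι) :
    simplexReflection i ⁻¹' cornerSimplex ι = cornerSimplex ι :=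
  Set.Subset.antisymm
    (fun x hx => simplexReflection_involutive i x ▸ mapsTo_simplexReflection i hx)
    (mapsTo_simplexReflection i)

theorem simplexReflection_eq_add_mulVec (i : ι) (x : ι → ℝ) :
    simplexReflection i x =
      Pi.single i 1 + (1 : Matrix ι ι ℝ).updateRow i (fun _ => -1) *ᵥ x := by
  ext j
  rcases eq_or_ne j i with rfl | hj
  · simp [simplexReflection, updateRow_mulVec, dotProduct]
    ring
  · simp [simplexReflection, updateRow_mulVec, hj]

theorem det_one_updateRow_neg_one (i : ι) :
    ((1 : Matrix ι ι ℝ).updateRow i fun _ => -1).det = -1 := by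
  have hrow : (fun _ : ι => (-1 : ℝ)) = ∑ k, (-1 : ℝ) • (1 : Matrix ι ι ℝ) k := by
    ext l
    simp [Matrix.one_apply]
  rw [hrow, det_updateRow_sum]
  simp

theorem measurePreserving_simplexReflection (i : ι) :
    MeasurePreserving (simplexReflection i) volume volume := by
  have hL := measurePreserving_mulVec (M := (1 : Matrix ι ι ℝ).updateRow i fun _ => -1)
    (by rw [det_one_updateRow_neg_one]; norm_num)
  rw [show simplexReflection i = _ from funext (simplexReflection_eq_add_mulVec i)]
  exact (measurePreserving_add_left volume _).comp hL

theorem setIntegral_cornerSimplex_one_sub_sum (i : ι) :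
    ∫ x in cornerSimplex ι, (1 - ∑ j, x j) = ∫ x in cornerSimplex ι, x i := by
  have hemb := (MeasurableEquiv.ofInvolutive _ (simplexReflection_involutive i)
    (measurePreserving_simplexReflection i).measurable).measurableEmbedding
  have h := (measurePreserving_simplexReflection i).setIntegral_preimage_emb hemb
    (fun x => x i) (cornerSimplex ι)
  rw [preimage_simplexReflection_cornerSimplex] at h
  simpa [simplexReflection] using h

end cornerSimplex

section barycentricCoord

variable {B : Type*} [Fintype B] [DecidableEq B] (b₀ : B)

def barycentricCoord (x : {f : B // f ≠ b₀} → ℝ) (f : B) : ℝ :=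
  if h : f = b₀ then 1 - ∑ i, x i else x ⟨f, h⟩

variable {b₀}

@[simp]
theorem barycentricCoord_self (x : {f : B // f ≠ b₀} → ℝ) :
    barycentricCoord b₀ x b₀ = 1 - ∑ i, x i :=
  dif_pos rfl

@[simp]
theorem barycentricCoord_coe (x : {f : B // f ≠ b₀} → ℝ) (i : {f : B // f ≠ b₀}) :
    barycentricCoord b₀ x i = x i :=
  dif_neg i.2

theorem continuous_barycentricCoord (f : B) :
    Continuous fun x => barycentricCoord b₀ x f := by
  unfold barycentricCoord
  split_ifs
  · exact continuous_const.sub (continuous_finsetSum _ fun i _ => continuous_apply i)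
  · exact continuous_apply _

theorem barycentricCoord_nonneg {x : {f : B // f ≠ b₀} → ℝ}
    (hx : x ∈ cornerSimplex {f : B // f ≠ b₀}) (f : B) : 0 ≤ barycentricCoord b₀ x f := by
  unfold barycentricCoord
  split_ifs
  · exact sub_nonneg.2 hx.2
  · exact hx.1 _

theorem sum_barycentricCoord (x : {f : B // f ≠ b₀} → ℝ) :
    ∑ f, barycentricCoord b₀ x f = 1 := by
  rw [Fintype.sum_eq_add_sum_subtype_ne _ b₀]
  simp

theorem integrableOn_barycentricCoord (f : B) :
    IntegrableOn (fun x => barycentricCoord b₀ x f) (cornerSimplex {f : B // f ≠ b₀}) :=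
  (continuous_barycentricCoord f).continuousOn.integrableOn_compact isCompact_cornerSimplex

theorem setIntegral_barycentricCoord_eq_one_sub_sum (f : B) :
    ∫ x in cornerSimplex {f : B // f ≠ b₀}, barycentricCoord b₀ x f =
      ∫ x in cornerSimplex {f : B // f ≠ b₀}, (1 - ∑ i, x i) := by
  obtain rfl | hf := eq_or_ne f b₀
  · simp
  · lift f to {f : B // f ≠ b₀} using hf
    simpa using (setIntegral_cornerSimplex_one_sub_sum f).symm

theorem setIntegral_barycentricCoord (f : B) :
    ∫ x in cornerSimplex {f : B // f ≠ b₀}, barycentricCoord b₀ x f =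
      volume.real (cornerSimplex {f : B // f ≠ b₀}) / Fintype.card B := by
  have htotal : ∑ g : B, ∫ x in cornerSimplex {f : B // f ≠ b₀}, barycentricCoord b₀ x g =
      volume.real (cornerSimplex {f : B // f ≠ b₀}) := by
    rw [← integral_finsetSum _ fun g _ => integrableOn_barycentricCoord g]
    simp [sum_barycentricCoord]
  simp only [setIntegral_barycentricCoord_eq_one_sub_sum, Finset.sum_const, Finset.card_univ,
    nsmul_eq_mul] at htotal ⊢
  have : Nonempty B := ⟨b₀⟩
  have hcard : (Fintype.card B : ℝ) ≠ 0 := by positivity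
  rw [← htotal]
  field_simp

theorem setIntegral_sum_barycentricCoord_mul (φ : B → ℝ) :
    ∫ x in cornerSimplex {f : B // f ≠ b₀}, ∑ f, barycentricCoord b₀ x f * φ f =
      1 / Fintype.card B * (∑ f, φ f) * volume.real (cornerSimplex {f : B // f ≠ b₀}) := by
  rw [integral_finsetSum _ fun f _ => (integrableOn_barycentricCoord f).mul_const (φ f)]
  simp only [integral_mul_const, setIntegral_barycentricCoord, Finset.mul_sum, Finset.sum_mul]
  refine Finset.sum_congr rfl fun f _ => ?_
  ring

end barycentricCoord

open MeasureTheory in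
theorem famine_of_favorable_biasing_distributions_general {Ω B : Type*}
    [Fintype Ω] [Fintype B] [DecidableEq B]
    (b₀ : B) (k : ℕ) (t : Finset Ω)
    (P : B → Ω → ℝ) (hP : ∀ f ω, 0 ≤ P f ω)
    (qmin : ℝ) (hq : 0 < qmin)
    -- φ f is the success probability of information resource f on target t
    (φ : B → ℝ) (hφ : ∀ f, φ f = ∑ ω ∈ t, P f ω)
    -- parametrization of distributions D on B by their coordinates away from b₀
    (Dof : ({f : B // f ≠ b₀} → ℝ) → B → ℝ)
    (hDof : ∀ x f, Dof x f = if h : f = b₀ then 1 - ∑ i, x i else x ⟨f, h⟩) :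
    volume {x : {f : B // f ≠ b₀} → ℝ |
        (∀ i, 0 ≤ x i) ∧ (∑ i, x i ≤ 1) ∧
          qmin ≤ ∑ f, Dof x f * φ f - (k : ℝ) / Fintype.card Ω} /
      volume {x : {f : B // f ≠ b₀} → ℝ | (∀ i, 0 ≤ x i) ∧ (∑ i, x i ≤ 1)}
      ≤ ENNReal.ofReal
          (((k : ℝ) / Fintype.card Ω +
              ((1 / (Fintype.card B : ℝ)) * ∑ f, φ f - (k : ℝ) / Fintype.card Ω))
            / qmin) := by
  obtain rfl : Dof = barycentricCoord b₀ := funext fun x => funext (hDof x)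
  set S := cornerSimplex {f : B // f ≠ b₀}
  set success := fun x => ∑ f, barycentricCoord b₀ x f * φ f
  have hφ_nonneg : ∀ f, 0 ≤ φ f := fun f => hφ f ▸ Finset.sum_nonneg fun ω _ => hP f ω
  have hp : 0 ≤ (k : ℝ) / Fintype.card Ω := by positivity
  have hsuccess : ∀ x ∈ S, 0 ≤ success x := fun x hx =>
    Finset.sum_nonneg fun f _ => mul_nonneg (barycentricCoord_nonneg hx f) (hφ_nonneg f)
  rw [add_sub_cancel]
  refine ENNReal.div_le_of_le_mul ?_
  calc _ ≤ volume {x | x ∈ S ∧ qmin ≤ success x} :=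
        measure_mono <| by
          rintro x ⟨hx₀, hx₁, hx⟩
          exact ⟨⟨hx₀, hx₁⟩, by linarith⟩
    _ ≤ ENNReal.ofReal ((∫ x in S, success x) / qmin) :=
        measure_le_ofReal_setIntegral_div measurableSet_cornerSimplex
          (integrable_finsetSum _ fun f _ => (integrableOn_barycentricCoord f).mul_const _)
          hsuccess hq
    _ = _ := by
        rw [setIntegral_sum_barycentricCoord_mul, mul_div_right_comm,
          ENNReal.ofReal_mul' measureReal_nonneg,
          ofReal_measureReal isCompact_cornerSimplex.measure_ne_top]
        rfl

open MeasureTheory in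
theorem famine_of_favorable_biasing_distributions {Ω B : Type*}
    [Fintype Ω] [DecidableEq Ω] [Fintype B] [DecidableEq B]
    (b₀ : B) (k : ℕ) (t : Finset Ω) (ht : t.card = k)
    (P : B → Ω → ℝ) (hP : ∀ f ω, 0 ≤ P f ω) (hsum : ∀ f, ∑ ω, P f ω = 1)
    (qmin : ℝ) (hq : 0 < qmin) (hq1 : qmin ≤ 1)
    -- φ f is the success probability of information resource f on target t
    (φ : B → ℝ) (hφ : ∀ f, φ f = ∑ ω ∈ t, P f ω)
    -- parametrization of distributions D on B by their coordinates away from b₀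
    (Dof : ({f : B // f ≠ b₀} → ℝ) → B → ℝ)
    (hDof : ∀ x f, Dof x f = if h : f = b₀ then 1 - ∑ i, x i else x ⟨f, h⟩) :
    volume {x : {f : B // f ≠ b₀} → ℝ |
        (∀ i, 0 ≤ x i) ∧ (∑ i, x i ≤ 1) ∧
          qmin ≤ ∑ f, Dof x f * φ f - (k : ℝ) / Fintype.card Ω} /
      volume {x : {f : B // f ≠ b₀} → ℝ | (∀ i, 0 ≤ x i) ∧ (∑ i, x i ≤ 1)}
      ≤ ENNReal.ofReal
          (((k : ℝ) / Fintype.card Ω +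
              ((1 / (Fintype.card B : ℝ)) * ∑ f, φ f - (k : ℝ) / Fintype.card Ω))
            / qmin) :=
  famine_of_favorable_biasing_distributions_general b₀ k t P hP qmin hq φ hφ Dof hDof
end

section
/- Let Ω be a finite set of size n and k ≤ n. Let T be a random k-element subset of Ω, F a random variable (information resource), and X a random element of Ω such that X is conditionally independent of T given F. Let Z = 𝟙(X ∈ T), P_g = Pr(X ∈ T), and I_Ω = log(n/k). Then P_g · I_Ω ≤ I(T; F) + D(P_T ∥ U_T) + H(Z | X), where I(T;F) is mutual information, P_T the marginal law of T, U_T the uniform distribution over k-element subsets, D the Kullback–Leibler divergence, and H conditional entropy. -/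
noncomputable def klTerm (a b : ℝ) : ℝ := if a = 0 then 0 else a * Real.log (a / b)

noncomputable def lr (a b : ℝ) : ℝ := if a = 0 then 0 else Real.log (a / b)

lemma klTerm_eq (a b : ℝ) : klTerm a b = a * lr a b := by
  unfold klTerm lr; split <;> simp_all

lemma lr_of_ne (a b : ℝ) (h : a ≠ 0) : lr a b = Real.log (a / b) := if_neg h

lemma sub_le_klTerm (a b : ℝ) (ha : 0 ≤ a) (hb : 0 ≤ b) (hab : a ≠ 0 → b ≠ 0) :
    a - b ≤ klTerm a b := by
  unfold klTerm
  rcases eq_or_ne a 0 with rfl | h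
  · simpa using hb
  · simp only [if_neg h]
    have ha' : 0 < a := lt_of_le_of_ne ha (Ne.symm h)
    have hb' : 0 < b := lt_of_le_of_ne hb (Ne.symm (hab h))
    have h1 : Real.log (b / a) ≤ b / a - 1 := Real.log_le_sub_one_of_pos (by positivity)
    have hlog : Real.log (a / b) = - Real.log (b / a) := by
      rw [← Real.log_inv]; congr 1; field_simp
    have h2 : a * (b/a) = b := by field_simp
    nlinarith [h1, ha', h2]

lemma gibbs {ι : Type*} [Fintype ι] (p q : ι → ℝ) (hp : ∀ i, 0 ≤ p i)
    (hq : ∀ i, 0 ≤ q i) (hpq : ∀ i, p i ≠ 0 → q i ≠ 0)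
    (hsum : ∑ i, q i ≤ ∑ i, p i) : 0 ≤ ∑ i, klTerm (p i) (q i) := by
  have h1 : ∑ i, (p i - q i) ≤ ∑ i, klTerm (p i) (q i) :=
    Finset.sum_le_sum fun i _ => sub_le_klTerm _ _ (hp i) (hq i) (hpq i)
  rw [Finset.sum_sub_distrib] at h1
  linarith

lemma sum_pos_of_ne {α : Type*} [Fintype α] (g : α → ℝ) (hg : ∀ a, 0 ≤ g a)
    (a : α) (h : g a ≠ 0) : 0 < ∑ b, g b :=
  Finset.sum_pos' (fun i _ => hg i) ⟨a, Finset.mem_univ a, lt_of_le_of_ne (hg a) (Ne.symm h)⟩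

lemma dsum_pos {α β : Type*} [Fintype α] [Fintype β] (g : α → β → ℝ)
    (hg : ∀ a b, 0 ≤ g a b) (a : α) (b : β) (h : g a b ≠ 0) :
    0 < ∑ a, ∑ b, g a b :=
  sum_pos_of_ne _ (fun a => Finset.sum_nonneg fun b _ => hg a b) a
    (ne_of_gt (sum_pos_of_ne (g a) (hg a) b h))

lemma sum_swap3 {α β γ : Type*} [Fintype α] [Fintype β] [Fintype γ] (g : α → β → γ → ℝ) :
    ∑ a, ∑ b, ∑ c, g a b c = ∑ c, ∑ a, ∑ b, g a b c :=
  calc ∑ a, ∑ b, ∑ c, g a b c = ∑ a, ∑ c, ∑ b, g a b c :=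
        Finset.sum_congr rfl fun a _ => Finset.sum_comm
    _ = ∑ c, ∑ a, ∑ b, g a b c := Finset.sum_comm

open Finset in
theorem learning_under_dependence_core {Ω F : Type*}
    [Fintype Ω] [DecidableEq Ω] [Fintype F]
    (n k : ℕ) (hn : Fintype.card Ω = n) (hk : 1 ≤ k) (hkn : k ≤ n)
    -- joint pmf of (T, F, X), with T supported on k-element subsets
    (μ : Finset Ω → F → Ω → ℝ)
    (hpos : ∀ t f x, 0 ≤ μ t f x)
    (hsum : ∑ t, ∑ f, ∑ x, μ t f x = 1)
    (hsupp : ∀ t f x, μ t f x ≠ 0 → t.card = k)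
    -- marginals
    (pT : Finset Ω → ℝ) (hpT : ∀ t, pT t = ∑ f, ∑ x, μ t f x)
    (pF : F → ℝ) (hpF : ∀ f, pF f = ∑ t, ∑ x, μ t f x)
    (pTF : Finset Ω → F → ℝ) (hpTF : ∀ t f, pTF t f = ∑ x, μ t f x)
    (pFX : F → Ω → ℝ) (hpFX : ∀ f x, pFX f x = ∑ t, μ t f x)
    (pX : Ω → ℝ) (hpX : ∀ x, pX x = ∑ t, ∑ f, μ t f x)
    -- joint pmf of (Z, X) where Z = 𝟙(X ∈ T)
    (pZX : Bool → Ω → ℝ)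
    (hpZXtrue : ∀ x, pZX true x = ∑ t, ∑ f, (if x ∈ t then μ t f x else 0))
    (hpZXfalse : ∀ x, pZX false x = ∑ t, ∑ f, (if x ∈ t then 0 else μ t f x))
    -- conditional independence of X and T given F
    (hindep : ∀ t f x, μ t f x * pF f = pTF t f * pFX f x)
    -- P_g = Pr(X ∈ T)
    (Pg : ℝ) (hPg : Pg = ∑ t, ∑ f, ∑ x, (if x ∈ t then μ t f x else 0)) :
    Pg * Real.log ((n : ℝ) / k)
      ≤ (∑ t, ∑ f, klTerm (pTF t f) (pT t * pF f))          -- I(T;F)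
        + (∑ t, klTerm (pT t) (1 / (n.choose k : ℝ)))       -- D(P_T ‖ U_T)
        + (-∑ z : Bool, ∑ x, klTerm (pZX z x) (pX x)) := by -- H(Z | X)
  -- abbreviations for marginals of (T,X)
  obtain ⟨pTX, hpTX⟩ : ∃ g : Finset Ω → Ω → ℝ, ∀ t x, g t x = ∑ f, μ t f x :=
    ⟨_, fun _ _ => rfl⟩
  obtain ⟨q1, hq1⟩ : ∃ g : Finset Ω → F → Ω → ℝ,
      ∀ t f x, g t f x = pTX t x * pFX f x / pX x := ⟨_, fun _ _ _ => rfl⟩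
  obtain ⟨q2, hq2⟩ : ∃ g : Finset Ω → Ω → ℝ, ∀ t x, g t x =
      if t.card = k then (if x ∈ t then pZX true x / ((n-1).choose (k-1) : ℝ)
        else pZX false x / ((n-1).choose k : ℝ)) else 0 := ⟨_, fun _ _ => rfl⟩
  obtain ⟨s, hs⟩ : ∃ g : Finset Ω → Ω → ℝ, ∀ t x, g t x =
      if x ∈ t then 0 else Real.log ((n.choose k : ℝ) / ((n-1).choose k : ℝ)) :=
    ⟨_, fun _ _ => rfl⟩
  -- combinatorial facts
  have pascal : n.choose k = (n-1).choose (k-1) + (n-1).choose k := by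
    obtain ⟨N, rfl⟩ : ∃ N, n = N+1 := ⟨n-1, by omega⟩
    obtain ⟨K, rfl⟩ : ∃ K, k = K+1 := ⟨k-1, by omega⟩
    simp [Nat.choose_succ_succ]
  have ratio : n * (n-1).choose (k-1) = n.choose k * k := by
    obtain ⟨N, rfl⟩ : ∃ N, n = N+1 := ⟨n-1, by omega⟩
    obtain ⟨K, rfl⟩ : ∃ K, k = K+1 := ⟨k-1, by omega⟩
    simpa using Nat.add_one_mul_choose_eq N K
  have hC1pos : 0 < (n-1).choose (k-1) := Nat.choose_pos (by omega)
  have hCpos : 0 < n.choose k := Nat.choose_pos hkn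
  have hC0le : (n-1).choose k ≤ n.choose k := by omega
  -- nonnegativity of marginals
  have hpTXnn : ∀ t x, 0 ≤ pTX t x := fun t x => by
    rw [hpTX]; exact Finset.sum_nonneg fun f _ => hpos t f x
  have hpFXnn : ∀ f x, 0 ≤ pFX f x := fun f x => by
    rw [hpFX]; exact Finset.sum_nonneg fun t _ => hpos t f x
  have hpXnn : ∀ x, 0 ≤ pX x := fun x => by
    rw [hpX]; exact Finset.sum_nonneg fun t _ => Finset.sum_nonneg fun f _ => hpos t f x
  have hpZXnn : ∀ z x, 0 ≤ pZX z x := by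
    intro z x
    cases z
    · rw [hpZXfalse]
      exact Finset.sum_nonneg fun t _ => Finset.sum_nonneg fun f _ => by
        split          <;> [exact le_refl 0; exact hpos t f x]
    · rw [hpZXtrue]
      exact Finset.sum_nonneg fun t _ => Finset.sum_nonneg fun f _ => by
        split          <;> [exact hpos t f x; exact le_refl 0]
  -- reduction of each term to a triple sum
  have hA : ∑ t, ∑ f, klTerm (pTF t f) (pT t * pF f)
      = ∑ t, ∑ f, ∑ x, μ t f x * lr (pTF t f) (pT t * pF f) := by
    refine Finset.sum_congr rfl fun t _ => Finset.sum_congr rfl fun f _ => ?_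
    rw [klTerm_eq, hpTF, Finset.sum_mul]
  have hB : ∑ t, klTerm (pT t) (1 / (n.choose k : ℝ))
      = ∑ t, ∑ f, ∑ x, μ t f x * lr (pT t) (1 / (n.choose k : ℝ)) := by
    refine Finset.sum_congr rfl fun t _ => ?_
    rw [klTerm_eq, hpT, Finset.sum_mul]
    exact Finset.sum_congr rfl fun f _ => Finset.sum_mul _ _ _
  have hCeq : ∑ z : Bool, ∑ x, klTerm (pZX z x) (pX x)
      = ∑ t, ∑ f, ∑ x, μ t f x *
        (if x ∈ t then lr (pZX true x) (pX x) else lr (pZX false x) (pX x)) := by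
    rw [Fintype.sum_bool, ← Finset.sum_add_distrib, sum_swap3]
    refine Finset.sum_congr rfl fun x _ => ?_
    rw [klTerm_eq, klTerm_eq, hpZXtrue, hpZXfalse, Finset.sum_mul, Finset.sum_mul,
      ← Finset.sum_add_distrib]
    refine Finset.sum_congr rfl fun t _ => ?_
    rw [Finset.sum_mul, Finset.sum_mul, ← Finset.sum_add_distrib]
    refine Finset.sum_congr rfl fun f _ => ?_
    by_cases h : x ∈ t <;> simp [h]
  have hL : Pg * Real.log ((n : ℝ) / (k : ℝ))
      = ∑ t, ∑ f, ∑ x, μ t f x *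
        (if x ∈ t then Real.log ((n : ℝ) / (k : ℝ)) else 0) := by
    rw [hPg, Finset.sum_mul]
    refine Finset.sum_congr rfl fun t _ => ?_
    rw [Finset.sum_mul]
    refine Finset.sum_congr rfl fun f _ => ?_
    rw [Finset.sum_mul]
    refine Finset.sum_congr rfl fun x _ => ?_
    split <;> simp
  -- the master pointwise identity
  have pointwise : ∀ t f x,
      μ t f x * lr (pTF t f) (pT t * pF f)
        + μ t f x * lr (pT t) (1 / (n.choose k : ℝ))
        - μ t f x * (if x ∈ t then lr (pZX true x) (pX x) else lr (pZX false x) (pX x))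
        - μ t f x * (if x ∈ t then Real.log ((n : ℝ) / (k : ℝ)) else 0)
      = klTerm (μ t f x) (q1 t f x) + μ t f x * lr (pTX t x) (q2 t x)
        + μ t f x * s t x := by
    intro t f x
    by_cases hmu : μ t f x = 0
    · simp [hmu, klTerm]
    have h0 : 0 < μ t f x := (hpos t f x).lt_of_ne (Ne.symm hmu)
    have hTF : 0 < pTF t f := by
      rw [hpTF]; exact sum_pos_of_ne _ (fun x => hpos t f x) x hmu
    have hT : 0 < pT t := by
      rw [hpT]; exact dsum_pos _ (fun f x => hpos t f x) f x hmu
    have hFm : 0 < pF f := by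
      rw [hpF]; exact dsum_pos _ (fun t x => hpos t f x) t x hmu
    have hFX : 0 < pFX f x := by
      rw [hpFX]; exact sum_pos_of_ne _ (fun t => hpos t f x) t hmu
    have hXp : 0 < pX x := by
      rw [hpX]; exact dsum_pos _ (fun t f => hpos t f x) t f hmu
    have hTX : 0 < pTX t x := by
      rw [hpTX]; exact sum_pos_of_ne _ (fun f => hpos t f x) f hmu
    have htc : t.card = k := hsupp t f x hmu
    have hn0 : (0:ℝ) < n := by exact_mod_cast (show 0 < n by omega)
    have hk0 : (0:ℝ) < k := by exact_mod_cast hk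
    have hC : (0:ℝ) < (n.choose k : ℝ) := by exact_mod_cast hCpos
    have hC1 : (0:ℝ) < ((n-1).choose (k-1) : ℝ) := by exact_mod_cast hC1pos
    have fact1 : Real.log (μ t f x) + Real.log (pF f)
        = Real.log (pTF t f) + Real.log (pFX f x) := by
      rw [← Real.log_mul (ne_of_gt h0) (ne_of_gt hFm),
        ← Real.log_mul (ne_of_gt hTF) (ne_of_gt hFX), hindep t f x]
    have hq1pos : 0 < pTX t x * pFX f x / pX x := by positivity
    have e1 : lr (pTF t f) (pT t * pF f)
        = Real.log (pTF t f) - Real.log (pT t) - Real.log (pF f) := by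
      rw [lr_of_ne _ _ (ne_of_gt hTF), Real.log_div (ne_of_gt hTF) (by positivity),
        Real.log_mul (ne_of_gt hT) (ne_of_gt hFm)]
      ring
    have e2 : lr (pT t) (1 / (n.choose k : ℝ))
        = Real.log (pT t) + Real.log (n.choose k : ℝ) := by
      rw [lr_of_ne _ _ (ne_of_gt hT), one_div, div_inv_eq_mul,
        Real.log_mul (ne_of_gt hT) (ne_of_gt hC)]
    have e4 : klTerm (μ t f x) (q1 t f x)
        = μ t f x * (Real.log (μ t f x)
          - (Real.log (pTX t x) + Real.log (pFX f x) - Real.log (pX x))) := by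
      rw [klTerm_eq, lr_of_ne _ _ hmu, hq1, Real.log_div hmu (ne_of_gt hq1pos),
        Real.log_div (by positivity) (ne_of_gt hXp),
        Real.log_mul (ne_of_gt hTX) (ne_of_gt hFX)]
    have e6 : Real.log ((n:ℝ)/(k:ℝ)) = Real.log (n:ℝ) - Real.log (k:ℝ) :=
      Real.log_div (ne_of_gt hn0) (ne_of_gt hk0)
    by_cases hx : x ∈ t
    · simp only [if_pos hx]
      have hZt : 0 < pZX true x := by
        rw [hpZXtrue]
        refine dsum_pos _ (fun t f => ?_) t f (by simp [hx, hmu])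
        split
        · exact hpos _ _ _
        · exact le_refl 0
      have fact2 : Real.log (k:ℝ) + Real.log (n.choose k : ℝ)
          = Real.log (n:ℝ) + Real.log ((n-1).choose (k-1):ℝ) := by
        have hcast : (n:ℝ) * ((n-1).choose (k-1):ℝ) = (n.choose k : ℝ) * (k:ℝ) := by
          exact_mod_cast ratio
        rw [← Real.log_mul (ne_of_gt hk0) (ne_of_gt hC),
          ← Real.log_mul (ne_of_gt hn0) (ne_of_gt hC1), mul_comm]
        exact congrArg Real.log hcast.symm
      have e3 : lr (pZX true x) (pX x)
          = Real.log (pZX true x) - Real.log (pX x) := by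
        rw [lr_of_ne _ _ (ne_of_gt hZt), Real.log_div (ne_of_gt hZt) (ne_of_gt hXp)]
      have e5 : lr (pTX t x) (q2 t x)
          = Real.log (pTX t x) - Real.log (pZX true x)
            + Real.log ((n-1).choose (k-1):ℝ) := by
        rw [hq2, if_pos htc, if_pos hx, lr_of_ne _ _ (ne_of_gt hTX),
          Real.log_div (ne_of_gt hTX) (ne_of_gt (div_pos hZt hC1)),
          Real.log_div (ne_of_gt hZt) (ne_of_gt hC1)]
        ring
      have e7 : s t x = 0 := by rw [hs, if_pos hx]
      rw [e1, e2, e3, e4, e5, e6, e7]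
      linear_combination (μ t f x) * fact2 - (μ t f x) * fact1
    · simp only [if_neg hx]
      have hkn' : k < n := by
        have h1 : t ⊆ univ.erase x := subset_erase.mpr ⟨subset_univ t, hx⟩
        have h2 := card_le_card h1
        rw [card_erase_of_mem (mem_univ x), card_univ, hn, htc] at h2
        omega
      have hC0pos : 0 < (n-1).choose k := Nat.choose_pos (by omega)
      have hC0 : (0:ℝ) < ((n-1).choose k : ℝ) := by exact_mod_cast hC0pos
      have hZf : 0 < pZX false x := by
        rw [hpZXfalse]
        refine dsum_pos _ (fun t f => ?_) t f (by simp [hx, hmu])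
        split
        · exact le_refl 0
        · exact hpos _ _ _
      have e3 : lr (pZX false x) (pX x)
          = Real.log (pZX false x) - Real.log (pX x) := by
        rw [lr_of_ne _ _ (ne_of_gt hZf), Real.log_div (ne_of_gt hZf) (ne_of_gt hXp)]
      have e5 : lr (pTX t x) (q2 t x)
          = Real.log (pTX t x) - Real.log (pZX false x)
            + Real.log ((n-1).choose k:ℝ) := by
        rw [hq2, if_pos htc, if_neg hx, lr_of_ne _ _ (ne_of_gt hTX),
          Real.log_div (ne_of_gt hTX) (ne_of_gt (div_pos hZf hC0)),
          Real.log_div (ne_of_gt hZf) (ne_of_gt hC0)]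
        ring
      have e7 : s t x = Real.log (n.choose k : ℝ) - Real.log ((n-1).choose k : ℝ) := by
        rw [hs, if_neg hx, Real.log_div (ne_of_gt hC) (ne_of_gt hC0)]
      rw [e1, e2, e3, e4, e5, e7]
      linear_combination (-(μ t f x)) * fact1
  -- nonnegativity of the three pieces
  have G1 : 0 ≤ ∑ t, ∑ f, ∑ x, klTerm (μ t f x) (q1 t f x) := by
    have hq1nn : ∀ t f x, 0 ≤ q1 t f x := fun t f x => by
      rw [hq1]; exact div_nonneg (mul_nonneg (hpTXnn t x) (hpFXnn f x)) (hpXnn x)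
    have hq1supp : ∀ t f x, μ t f x ≠ 0 → q1 t f x ≠ 0 := by
      intro t f x hmu
      rw [hq1]
      have h1 : 0 < pTX t x := by
        rw [hpTX]; exact sum_pos_of_ne _ (fun f => hpos t f x) f hmu
      have h2 : 0 < pFX f x := by
        rw [hpFX]; exact sum_pos_of_ne _ (fun t => hpos t f x) t hmu
      have h3 : 0 < pX x := by
        rw [hpX]; exact dsum_pos _ (fun t f => hpos t f x) t f hmu
      positivity
    have hTXmarg : ∀ x, ∑ t, pTX t x = pX x := fun x => by
      rw [hpX]; exact Finset.sum_congr rfl fun t _ => hpTX t x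
    have hFXmarg : ∀ x, ∑ f, pFX f x = pX x := fun x => by
      rw [hpX, Finset.sum_comm]; exact Finset.sum_congr rfl fun f _ => hpFX f x
    have hq1sum : ∑ t, ∑ f, ∑ x, q1 t f x ≤ ∑ t, ∑ f, ∑ x, μ t f x := by
      rw [hsum, sum_swap3 q1]
      have hXsum : ∑ x, pX x = 1 := by
        have h : ∑ x : Ω, pX x = ∑ x : Ω, ∑ t : Finset Ω, ∑ f : F, μ t f x :=
          Finset.sum_congr rfl fun x _ => hpX x
        rw [h, ← sum_swap3, hsum]
      calc ∑ x, ∑ t, ∑ f, q1 t f x ≤ ∑ x, pX x := by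
            refine Finset.sum_le_sum fun x _ => ?_
            have e : ∑ t, ∑ f, q1 t f x = (∑ t, pTX t x) * ((∑ f, pFX f x) / pX x) := by
              rw [Finset.sum_mul]
              refine Finset.sum_congr rfl fun t _ => ?_
              rw [Finset.sum_div, Finset.mul_sum]
              refine Finset.sum_congr rfl fun f _ => ?_
              rw [hq1 t f x, mul_div_assoc]
            rw [e, hTXmarg, hFXmarg]
            rcases eq_or_ne (pX x) 0 with h | h
            · simp [h]
            · rw [div_self h, mul_one]
        _ = 1 := hXsum
    have h := gibbs (ι := Finset Ω × F × Ω) (fun p => μ p.1 p.2.1 p.2.2)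
      (fun p => q1 p.1 p.2.1 p.2.2) (fun p => hpos _ _ _) (fun p => hq1nn _ _ _)
      (fun p => hq1supp _ _ _) (by simpa [Fintype.sum_prod_type] using hq1sum)
    simpa [Fintype.sum_prod_type] using h
  have G2 : 0 ≤ ∑ t, ∑ f, ∑ x, μ t f x * lr (pTX t x) (q2 t x) := by
    have hEq : ∑ t, ∑ f, ∑ x, μ t f x * lr (pTX t x) (q2 t x)
        = ∑ t, ∑ x, klTerm (pTX t x) (q2 t x) := by
      refine Finset.sum_congr rfl fun t _ => ?_
      rw [Finset.sum_comm]
      refine Finset.sum_congr rfl fun x _ => ?_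
      rw [klTerm_eq, hpTX, Finset.sum_mul]
    rw [hEq]
    have hq2nn : ∀ t x, 0 ≤ q2 t x := fun t x => by
      rw [hq2]
      split
      · split <;> exact div_nonneg (hpZXnn _ _) (Nat.cast_nonneg _)
      · exact le_refl 0
    have hq2supp : ∀ t x, pTX t x ≠ 0 → q2 t x ≠ 0 := by
      intro t x h
      rw [hpTX] at h
      obtain ⟨f, -, hf⟩ := Finset.exists_ne_zero_of_sum_ne_zero h
      have htc : t.card = k := hsupp t f x hf
      rw [hq2, if_pos htc]
      by_cases hx : x ∈ t
      · rw [if_pos hx]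
        have hZt : 0 < pZX true x := by
          rw [hpZXtrue]
          refine dsum_pos _ (fun t f => ?_) t f (by simp [hx, hf])
          split
          · exact hpos _ _ _
          · exact le_refl 0
        have hC1 : (0:ℝ) < ((n-1).choose (k-1) : ℝ) := by exact_mod_cast hC1pos
        exact ne_of_gt (div_pos hZt hC1)
      · rw [if_neg hx]
        have hkn' : k < n := by
          have h1 : t ⊆ univ.erase x := subset_erase.mpr ⟨subset_univ t, hx⟩
          have h2 := card_le_card h1
          rw [card_erase_of_mem (mem_univ x), card_univ, hn, htc] at h2
          omega
        have hC0 : (0:ℝ) < ((n-1).choose k : ℝ) := by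
          exact_mod_cast Nat.choose_pos (show k ≤ n - 1 by omega)
        have hZf : 0 < pZX false x := by
          rw [hpZXfalse]
          refine dsum_pos _ (fun t f => ?_) t f (by simp [hx, hf])
          split
          · exact le_refl 0
          · exact hpos _ _ _
        exact ne_of_gt (div_pos hZf hC0)
    have hrhs : ∑ t, ∑ x, pTX t x = 1 := by
      rw [← hsum]
      refine Finset.sum_congr rfl fun t _ => ?_
      rw [Finset.sum_comm]
      exact Finset.sum_congr rfl fun x _ => hpTX t x
    have hq2sum : ∑ t, ∑ x, q2 t x ≤ ∑ t, ∑ x, pTX t x := by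
      rw [hrhs, Finset.sum_comm]
      have hZsum : ∑ x, (pZX true x + pZX false x) = 1 := by
        have h : ∀ x : Ω, pZX true x + pZX false x = ∑ t, ∑ f, μ t f x := by
          intro x
          rw [hpZXtrue, hpZXfalse, ← Finset.sum_add_distrib]
          refine Finset.sum_congr rfl fun t _ => ?_
          rw [← Finset.sum_add_distrib]
          refine Finset.sum_congr rfl fun f _ => ?_
          by_cases hx : x ∈ t <;> simp [hx]
        rw [Finset.sum_congr rfl fun x _ => h x, ← sum_swap3, hsum]
      calc ∑ x, ∑ t, q2 t x ≤ ∑ x, (pZX true x + pZX false x) := by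
            refine Finset.sum_le_sum fun x _ => ?_
            have hsplit : ∀ t : Finset Ω, q2 t x
                = (if t.card = k ∧ x ∈ t then pZX true x / ((n-1).choose (k-1):ℝ) else 0)
                  + (if t.card = k ∧ x ∉ t then pZX false x / ((n-1).choose k : ℝ) else 0) := by
              intro t
              rw [hq2]
              by_cases h1 : t.card = k <;> by_cases h2 : x ∈ t <;> simp [h1, h2]
            rw [Finset.sum_congr rfl fun t _ => hsplit t, Finset.sum_add_distrib]
            have e1 : ∑ t : Finset Ω, (if t.card = k ∧ x ∈ t
                  then pZX true x / ((n-1).choose (k-1):ℝ) else 0)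
                = ((univ.filter fun t : Finset Ω => t.card = k ∧ x ∈ t).card : ℝ)
                  * (pZX true x / ((n-1).choose (k-1):ℝ)) := by
              rw [← Finset.sum_filter, Finset.sum_const, nsmul_eq_mul]
            have e2 : ∑ t : Finset Ω, (if t.card = k ∧ x ∉ t
                  then pZX false x / ((n-1).choose k:ℝ) else 0)
                = ((univ.filter fun t : Finset Ω => t.card = k ∧ x ∉ t).card : ℝ)
                  * (pZX false x / ((n-1).choose k:ℝ)) := by
              rw [← Finset.sum_filter, Finset.sum_const, nsmul_eq_mul]
            have hc0 : (univ.filter fun t : Finset Ω => t.card = k ∧ x ∉ t).card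
                = (n-1).choose k := by
              have heq : (univ.filter fun t : Finset Ω => t.card = k ∧ x ∉ t)
                  = (univ.erase x).powersetCard k := by
                ext t
                simp [Finset.mem_powersetCard, Finset.subset_erase, and_comm]
              rw [heq, Finset.card_powersetCard, card_erase_of_mem (mem_univ x),
                card_univ, hn]
            have hcall : (univ.filter fun t : Finset Ω => t.card = k).card = n.choose k := by
              have heq : (univ.filter fun t : Finset Ω => t.card = k)
                  = (univ : Finset Ω).powersetCard k := by
                ext t
                simp [Finset.mem_powersetCard]
              rw [heq, Finset.card_powersetCard, card_univ, hn]
            have hc1 : (univ.filter fun t : Finset Ω => t.card = k ∧ x ∈ t).card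
                = (n-1).choose (k-1) := by
              have hd := Finset.card_filter_add_card_filter_not
                (s := univ.filter fun t : Finset Ω => t.card = k) (p := fun t => x ∈ t)
              rw [Finset.filter_filter, Finset.filter_filter, hcall] at hd
              have hne : (univ.filter fun t : Finset Ω => t.card = k ∧ ¬ x ∈ t).card
                  = (n-1).choose k := hc0
              omega
            rw [e1, e2, hc0, hc1]
            have b1 : (((n-1).choose (k-1) : ℕ) : ℝ)
                * (pZX true x / (((n-1).choose (k-1) : ℕ) : ℝ)) = pZX true x := by
              rw [mul_comm, div_mul_cancel₀]
              exact_mod_cast hC1pos.ne'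
            have b2 : (((n-1).choose k : ℕ) : ℝ)
                * (pZX false x / (((n-1).choose k : ℕ) : ℝ)) ≤ pZX false x := by
              rcases Nat.eq_zero_or_pos ((n-1).choose k) with h | h
              · simp [h]
                exact hpZXnn false x
              · rw [mul_comm, div_mul_cancel₀]
                exact_mod_cast h.ne'
            linarith
        _ = 1 := hZsum
    have h := gibbs (ι := Finset Ω × Ω) (fun p => pTX p.1 p.2) (fun p => q2 p.1 p.2)
      (fun p => hpTXnn _ _) (fun p => hq2nn _ _) (fun p => hq2supp _ _)
      (by simpa [Fintype.sum_prod_type] using hq2sum)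
    simpa [Fintype.sum_prod_type] using h
  have G3 : 0 ≤ ∑ t, ∑ f, ∑ x, μ t f x * s t x := by
    refine Finset.sum_nonneg fun t _ => Finset.sum_nonneg fun f _ =>
      Finset.sum_nonneg fun x _ => mul_nonneg (hpos t f x) ?_
    rw [hs]
    split
    · exact le_refl 0
    · rcases Nat.eq_zero_or_pos ((n-1).choose k) with h0 | h0
      · simp [h0]
      · refine Real.log_nonneg ((one_le_div (by exact_mod_cast h0)).mpr ?_)
        exact_mod_cast hC0le
  -- combine
  have split : ∑ t, ∑ f, ∑ x,
      (μ t f x * lr (pTF t f) (pT t * pF f)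
        + μ t f x * lr (pT t) (1 / (n.choose k : ℝ))
        - μ t f x * (if x ∈ t then lr (pZX true x) (pX x) else lr (pZX false x) (pX x))
        - μ t f x * (if x ∈ t then Real.log ((n : ℝ) / (k : ℝ)) else 0))
      = (∑ t, ∑ f, ∑ x, μ t f x * lr (pTF t f) (pT t * pF f))
        + (∑ t, ∑ f, ∑ x, μ t f x * lr (pT t) (1 / (n.choose k : ℝ)))
        - (∑ t, ∑ f, ∑ x, μ t f x *
            (if x ∈ t then lr (pZX true x) (pX x) else lr (pZX false x) (pX x)))
        - (∑ t, ∑ f, ∑ x, μ t f x *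
            (if x ∈ t then Real.log ((n : ℝ) / (k : ℝ)) else 0)) := by
    simp [Finset.sum_add_distrib, Finset.sum_sub_distrib]
  have split2 : ∑ t, ∑ f, ∑ x,
      (klTerm (μ t f x) (q1 t f x) + μ t f x * lr (pTX t x) (q2 t x)
        + μ t f x * s t x)
      = (∑ t, ∑ f, ∑ x, klTerm (μ t f x) (q1 t f x))
        + (∑ t, ∑ f, ∑ x, μ t f x * lr (pTX t x) (q2 t x))
        + (∑ t, ∑ f, ∑ x, μ t f x * s t x) := by
    simp [Finset.sum_add_distrib]
  have main : ∑ t, ∑ f, ∑ x,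
      (μ t f x * lr (pTF t f) (pT t * pF f)
        + μ t f x * lr (pT t) (1 / (n.choose k : ℝ))
        - μ t f x * (if x ∈ t then lr (pZX true x) (pX x) else lr (pZX false x) (pX x))
        - μ t f x * (if x ∈ t then Real.log ((n : ℝ) / (k : ℝ)) else 0))
      = ∑ t, ∑ f, ∑ x,
      (klTerm (μ t f x) (q1 t f x) + μ t f x * lr (pTX t x) (q2 t x)
        + μ t f x * s t x) :=
    Finset.sum_congr rfl fun t _ => Finset.sum_congr rfl fun f _ =>
      Finset.sum_congr rfl fun x _ => pointwise t f x
  rw [main, split2] at split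
  rw [hA, hB, hCeq, hL]
  linarith [split, G1, G2, G3]
end

section
/- Let Ω be a finite set of size n, k ≤ n, and suppose T is a random k-element subset, F a random information resource, X a random element of Ω with X conditionally independent of T given F. With I_Ω = log₂(n/k) and q = Pr(X ∈ T), it holds that q ≤ (I(T;F) + D(P_T ∥ U_T) + 1)/I_Ω, where I(T;F) is the mutual information, P_T the marginal of T, and U_T the uniform distribution on k-subsets. -/
/-!
Write `ρ` for the joint law of `(T, F)` and `U` for the uniform law on `k`-subsets. The chain
rule splits `D(ρ ‖ U ⊗ P_F)` into `I(T;F) + D(P_T ‖ U)`, so it suffices to bound this single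
divergence from below. Under `U ⊗ P_F` the event `X ∈ T` has probability `k/n`, because `X` depends
on `T` only through `F`; under `ρ` it has probability `q`. Testing the divergence against the
weight `y = (1 + g (n/k - 1)) / 2`, where `g = Pr(X ∈ T | T, F)`, and using concavity of `log`
gives `D ≥ q log (n/k) - log 2`, which is the claim in nats.
-/

/-- `klTerm2 a b = a * log₂ (a / b)`, with the convention `0 * log₂ (0 / b) = 0`. -/
noncomputable def klTerm2 (a b : ℝ) : ℝ := if a = 0 then 0 else a * Real.logb 2 (a / b)

open Finset Real

lemma klTerm2_eq_mul_log_div (a b : ℝ) : klTerm2 a b = a * log (a / b) / log 2 := by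
  unfold klTerm2 logb
  split_ifs with ha <;> simp [ha, mul_div_assoc]

lemma mul_log_add_sub_le_mul_log_div {a b y : ℝ} (ha : 0 ≤ a) (hb : 0 ≤ b)
    (hab : b = 0 → a = 0) (hy : 0 < y) : a * log y + a - y * b ≤ a * log (a / b) := by
  rcases ha.eq_or_lt with rfl | ha
  · simpa using mul_nonneg hy.le hb
  have hb : 0 < b := hb.lt_of_ne fun h => ha.ne' (hab h.symm)
  have hgibbs : a * (log y + log b - log a) ≤ y * b - a := calc
    _ = a * log (y * b / a) := by rw [log_div (by positivity) ha.ne', log_mul hy.ne' hb.ne']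
    _ ≤ a * (y * b / a - 1) :=
      mul_le_mul_of_nonneg_left (log_le_sub_one_of_pos (by positivity)) ha.le
    _ = y * b - a := by field_simp
  rw [log_div ha.ne' hb.ne']
  linarith

lemma mul_log_le_log_one_add_mul {g N : ℝ} (hg0 : 0 ≤ g) (hg1 : g ≤ 1) (hN : 1 ≤ N) :
    g * log N ≤ log (1 + g * (N - 1)) := by
  have hN0 : 0 < N := by linarith
  rw [← log_rpow hN0]
  refine log_le_log (by positivity) ?_
  simpa using rpow_one_add_le_one_add_mul_self (s := N - 1) (by linarith) hg0 hg1

lemma sum_mul_mul_log_sub_log_two_le_sum_mul_log_div {ι : Type*} [Fintype ι]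
    {a b g : ι → ℝ} {N : ℝ} (ha : ∀ i, 0 ≤ a i) (hb : ∀ i, 0 ≤ b i)
    (hab : ∀ i, b i = 0 → a i = 0) (hsa : ∑ i, a i = 1) (hsb : ∑ i, b i ≤ 1)
    (hg0 : ∀ i, 0 ≤ g i) (hg1 : ∀ i, g i ≤ 1) (hN : 1 ≤ N) (hbg : ∑ i, b i * g i ≤ N⁻¹) :
    (∑ i, a i * g i) * log N - log 2 ≤ ∑ i, a i * log (a i / b i) := by
  -- `∑ a log (a / b) ≥ ∑ a log y + ∑ a - ∑ y b` for every positive `y`; the `1/2` makes `∑ y b ≤ 1`.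
  set y : ι → ℝ := fun i => (1 + g i * (N - 1)) / 2
  have hnum : ∀ i, 0 < 1 + g i * (N - 1) := fun i => by
    linarith [mul_nonneg (hg0 i) (sub_nonneg.2 hN)]
  have hy : ∀ i, 0 < y i := fun i => half_pos (hnum i)
  have hyb : ∑ i, y i * b i ≤ 1 := by
    have hsum : ∑ i, y i * b i = (∑ i, b i + (N - 1) * ∑ i, b i * g i) / 2 := by
      simp only [y, mul_sum, ← sum_add_distrib, sum_div]
      exact sum_congr rfl fun i _ => by ring
    have hN0 : 0 < N := by linarith
    have : (N - 1) * ∑ i, b i * g i ≤ 1 := calc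
      _ ≤ (N - 1) * N⁻¹ := mul_le_mul_of_nonneg_left hbg (by linarith)
      _ ≤ 1 := by rw [sub_mul, mul_inv_cancel₀ hN0.ne']; linarith [inv_pos.2 hN0]
    rw [hsum]; linarith
  calc (∑ i, a i * g i) * log N - log 2 = ∑ i, a i * (g i * log N - log 2) := by
        simp only [mul_sub, sum_sub_distrib, ← mul_assoc, ← sum_mul, hsa, one_mul]
    _ ≤ ∑ i, a i * log (y i) := sum_le_sum fun i _ => by
        refine mul_le_mul_of_nonneg_left ?_ (ha i)
        rw [log_div (hnum i).ne' two_ne_zero]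
        linarith [mul_log_le_log_one_add_mul (hg0 i) (hg1 i) hN]
    _ ≤ ∑ i, (a i * log (y i) + a i - y i * b i) := by
        rw [sum_sub_distrib, sum_add_distrib, hsa]; linarith
    _ ≤ ∑ i, a i * log (a i / b i) := sum_le_sum fun i _ =>
        mul_log_add_sub_le_mul_log_div (ha i) (hb i) (hab i) (hy i)

lemma sum_sum_mul_log_div_mul_eq {α β : Type*} [Fintype α] [Fintype β] {ρ : α → β → ℝ}
    {u : α → ℝ} {w : β → ℝ} (hρ : ∀ a b, 0 ≤ ρ a b) (hu : ∀ a b, ρ a b ≠ 0 → u a ≠ 0)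
    (hw : ∀ a b, ρ a b ≠ 0 → w b ≠ 0) :
    ∑ a, ∑ b, ρ a b * log (ρ a b / (u a * w b)) =
      ∑ a, ∑ b, ρ a b * log (ρ a b / ((∑ b', ρ a b') * w b)) +
        ∑ a, (∑ b, ρ a b) * log ((∑ b, ρ a b) / u a) := by
  rw [← sum_add_distrib]
  refine sum_congr rfl fun a _ => ?_
  rw [sum_mul, ← sum_add_distrib]
  refine sum_congr rfl fun b _ => ?_
  by_cases h : ρ a b = 0
  · simp [h]
  have hmarg : ∑ b', ρ a b' ≠ 0 :=
    (lt_of_lt_of_le ((hρ a b).lt_of_ne' h) (single_le_sum (fun b' _ => hρ a b') (mem_univ b))).ne'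
  rw [← mul_add, ← log_mul (div_ne_zero h (mul_ne_zero hmarg (hw a b h)))
    (div_ne_zero hmarg (hu a b h))]
  congr 2
  field_simp

noncomputable def uniformKSubset (Ω : Type*) [Fintype Ω] (k : ℕ) (t : Finset Ω) : ℝ :=
  if t.card = k then 1 / (Fintype.card Ω).choose k else 0

section UniformKSubset

variable {Ω : Type*} [Fintype Ω] {k : ℕ}

lemma uniformKSubset_nonneg (t : Finset Ω) : 0 ≤ uniformKSubset Ω k t := by
  unfold uniformKSubset; split_ifs <;> positivity

lemma sum_uniformKSubset_eq_sum_powersetCard (φ : Finset Ω → ℝ) :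
    ∑ t, uniformKSubset Ω k t * φ t =
      1 / (Fintype.card Ω).choose k * ∑ t ∈ powersetCard k univ, φ t := by
  simp only [uniformKSubset, ite_mul, zero_mul, sum_ite, sum_const_zero, add_zero, mul_sum]
  exact sum_congr (by ext; simp) fun _ _ => rfl

lemma sum_uniformKSubset (hk : k ≤ Fintype.card Ω) : ∑ t, uniformKSubset Ω k t = 1 := by
  have hc : ((Fintype.card Ω).choose k : ℝ) ≠ 0 := by exact_mod_cast (Nat.choose_pos hk).ne'
  simpa [hc] using sum_uniformKSubset_eq_sum_powersetCard (Ω := Ω) (k := k) (fun _ => 1)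

lemma card_filter_mem_powersetCard_univ [DecidableEq Ω] (x : Ω) (k : ℕ) :
    #{t ∈ powersetCard (k + 1) univ | x ∈ t} = (Fintype.card Ω - 1).choose k := by
  rw [← card_univ, ← card_erase_of_mem (mem_univ x), ← card_powersetCard]
  refine card_nbij' (·.erase x) (insert x) ?_ ?_ ?_ ?_
  · intro t ht
    simp only [coe_filter, mem_powersetCard_univ, Set.mem_ofPred_eq] at ht
    simp [mem_powersetCard, card_erase_of_mem ht.2, ht.1, erase_subset_erase]
  · intro s hs
    simp only [mem_coe, mem_powersetCard, subset_erase] at hs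
    simp [hs.1.2, hs.2]
  · intro t ht
    simp only [coe_filter, Set.mem_ofPred_eq] at ht
    exact insert_erase ht.2
  · intro s hs
    simp only [mem_coe, mem_powersetCard, subset_erase] at hs
    exact erase_insert hs.1.2

lemma sum_uniformKSubset_mul_sum_mem (hk : k ≤ Fintype.card Ω) (h : Ω → ℝ) :
    ∑ t, uniformKSubset Ω k t * ∑ x ∈ t, h x = k / Fintype.card Ω * ∑ x, h x := by
  classical
  rw [sum_uniformKSubset_eq_sum_powersetCard]
  cases k with
  | zero => simp
  | succ j =>
    obtain ⟨m, hm⟩ : ∃ m, Fintype.card Ω = m + 1 := ⟨Fintype.card Ω - 1, by omega⟩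
    have hcount : ∑ t ∈ powersetCard (j + 1) univ, ∑ x ∈ t, h x = m.choose j * ∑ x, h x := by
      rw [sum_comm' (t' := univ) (s' := fun x => {t ∈ powersetCard (j + 1) univ | x ∈ t})
        (by simp), mul_sum]
      simp [card_filter_mem_powersetCard_univ, hm, mul_comm]
    have hchoose : ((m + 1 : ℕ) : ℝ) * m.choose j = (m + 1).choose (j + 1) * (j + 1 : ℕ) := by
      exact_mod_cast Nat.add_one_mul_choose_eq m j
    have hc : ((m + 1).choose (j + 1) : ℝ) ≠ 0 := by
      exact_mod_cast (Nat.choose_pos (by omega)).ne'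
    rw [hcount, hm, ← mul_assoc]
    congr 1
    field_simp
    linarith

lemma sum_sum_uniformKSubset_mul_mul_sum_mem_le {F : Type*} [Fintype F]
    (hk : k ≤ Fintype.card Ω) {w : F → ℝ} (hw : ∀ f, 0 ≤ w f) {κ : F → Ω → ℝ}
    (hκ : ∀ f, ∑ x, κ f x ≤ 1) :
    ∑ t, ∑ f, uniformKSubset Ω k t * w f * ∑ x ∈ t, κ f x ≤ k / Fintype.card Ω * ∑ f, w f := calc
  _ = ∑ f, w f * ∑ t, uniformKSubset Ω k t * ∑ x ∈ t, κ f x := by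
    rw [sum_comm]
    refine sum_congr rfl fun f _ => ?_
    rw [mul_sum]
    exact sum_congr rfl fun t _ => by ring
  _ ≤ ∑ f, w f * (k / Fintype.card Ω) := by
    refine sum_le_sum fun f _ => mul_le_mul_of_nonneg_left ?_ (hw f)
    rw [sum_uniformKSubset_mul_sum_mem hk]
    exact mul_le_of_le_one_right (by positivity) (hκ f)
  _ = _ := by rw [← sum_mul, mul_comm]

end UniformKSubset

-- `ρ` is the law of `(T, F)` and `κ f` the law of `X` given `F = f`.
theorem sum_mul_sum_mem_mul_log_sub_log_two_le {Ω F : Type*} [Fintype Ω] [Fintype F] {k : ℕ}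
    (hk : 0 < k) (hkn : k ≤ Fintype.card Ω) {ρ : Finset Ω → F → ℝ} (hρ0 : ∀ t f, 0 ≤ ρ t f)
    (hρ1 : ∑ t, ∑ f, ρ t f = 1) (hρk : ∀ t f, ρ t f ≠ 0 → t.card = k) {κ : F → Ω → ℝ}
    (hκ0 : ∀ f x, 0 ≤ κ f x) (hκ1 : ∀ f, ∑ x, κ f x ≤ 1) :
    (∑ t, ∑ f, ρ t f * ∑ x ∈ t, κ f x) * log (Fintype.card Ω / k) - log 2 ≤
      ∑ t, ∑ f, ρ t f * log (ρ t f / ((∑ f', ρ t f') * ∑ t', ρ t' f)) +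
        ∑ t, (∑ f, ρ t f) * log ((∑ f, ρ t f) / (1 / (Fintype.card Ω).choose k)) := by
  set u := uniformKSubset Ω k
  have hc : ((Fintype.card Ω).choose k : ℝ) ≠ 0 := by exact_mod_cast (Nat.choose_pos hkn).ne'
  have hu : ∀ t f, ρ t f ≠ 0 → u t = 1 / (Fintype.card Ω).choose k := fun t f h => by
    simp [u, uniformKSubset, hρk t f h]
  have hpF : ∀ t f, ρ t f ≠ 0 → ∑ t', ρ t' f ≠ 0 := fun t f h =>
    ((hρ0 t f).lt_of_ne' h |>.trans_le (single_le_sum (fun t' _ => hρ0 t' f) (mem_univ t))).ne'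
  have hsF : ∑ f, ∑ t, ρ t f = 1 := by rw [sum_comm, hρ1]
  have hsb : ∑ t, ∑ f, u t * ∑ t', ρ t' f = 1 := by
    simp only [← mul_sum]
    rw [← sum_mul, sum_uniformKSubset hkn, hsF, one_mul]
  have hbg := sum_sum_uniformKSubset_mul_mul_sum_mem_le hkn (w := fun f => ∑ t', ρ t' f)
    (fun f => sum_nonneg fun t _ => hρ0 t f) hκ1
  rw [hsF, mul_one, ← inv_div] at hbg
  have key := sum_mul_mul_log_sub_log_two_le_sum_mul_log_div (ι := Finset Ω × F)
    (a := fun i => ρ i.1 i.2) (b := fun i => u i.1 * ∑ t', ρ t' i.2)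
    (g := fun i => ∑ x ∈ i.1, κ i.2 x) (N := Fintype.card Ω / k)
    (fun i => hρ0 i.1 i.2)
    (fun i => mul_nonneg (uniformKSubset_nonneg _) (sum_nonneg fun t _ => hρ0 t i.2))
    (fun ⟨t, f⟩ h => by
      by_contra hρ
      exact mul_ne_zero (hu t f hρ ▸ one_div_ne_zero hc) (hpF t f hρ) h)
    (by rw [Fintype.sum_prod_type]; exact hρ1)
    (by rw [Fintype.sum_prod_type]; exact hsb.le)
    (fun i => sum_nonneg fun x _ => hκ0 i.2 x)
    (fun i => (sum_le_univ_sum_of_nonneg (hκ0 i.2)).trans (hκ1 i.2))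
    ((one_le_div (by positivity)).2 (by exact_mod_cast hkn))
    (by rw [Fintype.sum_prod_type]; exact hbg)
  have hD : ∑ t, (∑ f, ρ t f) * log ((∑ f, ρ t f) / u t) =
      ∑ t, (∑ f, ρ t f) * log ((∑ f, ρ t f) / (1 / (Fintype.card Ω).choose k)) := by
    refine sum_congr rfl fun t _ => ?_
    rw [sum_mul, sum_mul]
    refine sum_congr rfl fun f _ => ?_
    by_cases h : ρ t f = 0
    · simp [h]
    · rw [hu t f h]
  simp only [Fintype.sum_prod_type] at key
  rwa [sum_sum_mul_log_div_mul_eq hρ0 (fun t f h => hu t f h ▸ one_div_ne_zero hc) hpF, hD] at key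

lemma sum_mem_eq_mul_sum_mem_div_of_condIndep {α β γ : Type*} [Fintype α] [Fintype γ]
    {μ : α → β → γ → ℝ} (hμ : ∀ a b c, 0 ≤ μ a b c) {pB : β → ℝ}
    (hpB : ∀ b, pB b = ∑ a, ∑ c, μ a b c) {pAB : α → β → ℝ} {pBC : β → γ → ℝ}
    (hindep : ∀ a b c, μ a b c * pB b = pAB a b * pBC b c) (a : α) (b : β) (s : Finset γ) :
    ∑ c ∈ s, μ a b c = pAB a b * ∑ c ∈ s, pBC b c / pB b := by
  by_cases hb : pB b = 0
  · have hμ0 : ∀ c, μ a b c = 0 := by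
      rw [hpB, sum_eq_zero_iff_of_nonneg fun a _ => sum_nonneg fun c _ => hμ a b c] at hb
      exact fun c => (sum_eq_zero_iff_of_nonneg fun c _ => hμ a b c).1 (hb a (mem_univ a)) c
        (mem_univ c)
    simp [hμ0, hb]
  · rw [mul_sum]
    exact sum_congr rfl fun c _ => by rw [mul_div_assoc', eq_div_iff hb, hindep]

open Finset in
theorem learning_under_dependence {Ω F : Type*}
    [Fintype Ω] [DecidableEq Ω] [Fintype F]
    (n k : ℕ) (hn : Fintype.card Ω = n) (hk : 1 ≤ k) (hkn : k < n)
    -- joint pmf of (T, F, X), with T supported on k-element subsets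
    (μ : Finset Ω → F → Ω → ℝ)
    (hpos : ∀ t f x, 0 ≤ μ t f x)
    (hsum : ∑ t, ∑ f, ∑ x, μ t f x = 1)
    (hsupp : ∀ t f x, μ t f x ≠ 0 → t.card = k)
    -- marginals
    (pT : Finset Ω → ℝ) (hpT : ∀ t, pT t = ∑ f, ∑ x, μ t f x)
    (pF : F → ℝ) (hpF : ∀ f, pF f = ∑ t, ∑ x, μ t f x)
    (pTF : Finset Ω → F → ℝ) (hpTF : ∀ t f, pTF t f = ∑ x, μ t f x)
    (pFX : F → Ω → ℝ) (hpFX : ∀ f x, pFX f x = ∑ t, μ t f x)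
    -- conditional independence of X and T given F
    (hindep : ∀ t f x, μ t f x * pF f = pTF t f * pFX f x)
    -- q = Pr(X ∈ T)
    (q : ℝ) (hq : q = ∑ t, ∑ f, ∑ x, (if x ∈ t then μ t f x else 0)) :
    q ≤ ((∑ t, ∑ f, klTerm2 (pTF t f) (pT t * pF f))        -- I(T;F)
          + (∑ t, klTerm2 (pT t) (1 / (n.choose k : ℝ)))    -- D(P_T ‖ U_T)
          + 1)
        / Real.logb 2 ((n : ℝ) / k) := by
  subst hn
  have hpT' : ∀ t, pT t = ∑ f, pTF t f := fun t => by simp only [hpT, hpTF]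
  have hpF' : ∀ f, pF f = ∑ t, pTF t f := fun f => by simp only [hpF, hpTF]
  have hpFX' : ∀ f, ∑ x, pFX f x = pF f := fun f => by simp only [hpFX, hpF, sum_comm (γ := Ω)]
  have hq' : q = ∑ t, ∑ f, pTF t f * ∑ x ∈ t, pFX f x / pF f := by
    simp only [hq, sum_ite_mem, univ_inter, sum_mem_eq_mul_sum_mem_div_of_condIndep hpos hpF hindep]
  have key := sum_mul_sum_mem_mul_log_sub_log_two_le hk hkn.le
    (fun t f => hpTF t f ▸ sum_nonneg fun x _ => hpos t f x) (by simpa only [hpTF] using hsum)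
    (fun t f h => by
      obtain ⟨x, -, hx⟩ := exists_ne_zero_of_sum_ne_zero (hpTF t f ▸ h)
      exact hsupp t f x hx)
    (κ := fun f x => pFX f x / pF f)
    (fun f x => div_nonneg (hpFX f x ▸ sum_nonneg fun t _ => hpos t f x)
      (hpF f ▸ sum_nonneg fun t _ => sum_nonneg fun x _ => hpos t f x))
    (fun f => by rw [← sum_div, hpFX']; exact div_self_le_one _)
  rw [← hq'] at key
  simp only [← hpF', ← hpT'] at key
  have hL : 0 < Real.log (Fintype.card Ω / k) :=
    Real.log_pos ((one_lt_div (by positivity)).2 (by exact_mod_cast hkn))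
  simp only [klTerm2_eq_mul_log_div, ← sum_div, Real.logb]
  rw [le_div_iff₀ (div_pos hL (Real.log_pos one_lt_two)), mul_div_assoc', ← add_div,
    div_add_one (Real.log_pos one_lt_two).ne',
    div_le_div_iff_of_pos_right (Real.log_pos one_lt_two)]
  linarith
end

section
/- Let Ω be a finite set, P a probability distribution on Ω, and let S be the uniform random variable over k-element subsets of Ω (1 ≤ k ≤ |Ω|). Then Pr(P(S) ≥ q_min) ≤ (k/|Ω|)/q_min for any q_min > 0, where P(S) = ∑_{ω∈S} P(ω). -/
open Finset in
lemma count_subsets_containing {Ω : Type*} [Fintype Ω] [DecidableEq Ω]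
    (k : ℕ) (hk : 1 ≤ k) (ω : Ω) :
    (((Finset.univ : Finset Ω).powersetCard k).filter (fun s => ω ∈ s)).card
      = (Fintype.card Ω - 1).choose (k - 1) := by
  obtain ⟨m, rfl⟩ : ∃ m, k = m + 1 := ⟨k - 1, (Nat.succ_pred_eq_of_pos hk).symm⟩
  have huniv : (Finset.univ : Finset Ω) = insert ω (Finset.univ.erase ω) :=
    (insert_erase (mem_univ ω)).symm
  rw [huniv, powersetCard_succ_insert (notMem_erase ω _), filter_union]
  have h1 : ((Finset.univ.erase ω).powersetCard (m + 1)).filter (fun s => ω ∈ s) = ∅ := by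
    apply filter_eq_empty_iff.2
    intro s hs hmem
    exact (notMem_erase ω _) ((mem_powersetCard.1 hs).1 hmem)
  have h2 : (((Finset.univ.erase ω).powersetCard m).image (insert ω)).filter
      (fun s => ω ∈ s) = ((Finset.univ.erase ω).powersetCard m).image (insert ω) := by
    apply filter_eq_self.2
    intro s hs
    obtain ⟨t, _, rfl⟩ := mem_image.1 hs
    exact mem_insert_self ω t
  rw [h1, h2, empty_union, card_image_of_injOn, card_powersetCard,
    card_erase_of_mem (mem_univ ω), card_univ]
  · simp
  · intro s hs t ht hst
    have hsω : ω ∉ s := fun h => (notMem_erase ω _) ((mem_powersetCard.1 hs).1 h)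
    have htω : ω ∉ t := fun h => (notMem_erase ω _) ((mem_powersetCard.1 ht).1 h)
    rw [← erase_insert hsω, ← erase_insert htω, hst]

open Finset in
theorem prob_favorable_target_le {Ω : Type*} [Fintype Ω] [DecidableEq Ω]
    (k : ℕ) (hk : 1 ≤ k) (hkn : k ≤ Fintype.card Ω)
    (P : Ω → ℝ) (hP : ∀ ω, 0 ≤ P ω) (hsum : ∑ ω, P ω = 1)
    (qmin : ℝ) (hq : 0 < qmin) :
    ((((Finset.univ : Finset Ω).powersetCard k).filter
        (fun s => qmin ≤ ∑ ω ∈ s, P ω)).card : ℝ) /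
        (((Finset.univ : Finset Ω).powersetCard k).card : ℝ)
      ≤ ((k : ℝ) / Fintype.card Ω) / qmin := by
  set n := Fintype.card Ω with hn
  have hn1 : 1 ≤ n := le_trans hk hkn
  set A := (Finset.univ : Finset Ω).powersetCard k with hA
  set F := A.filter (fun s => qmin ≤ ∑ ω ∈ s, P ω) with hF
  -- total sum
  have htot : ∑ s ∈ A, ∑ ω ∈ s, P ω = ((n - 1).choose (k - 1) : ℝ) := by
    have : ∀ s ∈ A, ∑ ω ∈ s, P ω = ∑ ω : Ω, if ω ∈ s then P ω else 0 := by
      intro s _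
      rw [sum_ite_mem]
      congr 1
      exact (inter_eq_right.2 (subset_univ s)).symm
    rw [sum_congr rfl this, sum_comm]
    have : ∀ ω : Ω, ∑ s ∈ A, (if ω ∈ s then P ω else 0)
        = ((n - 1).choose (k - 1) : ℝ) * P ω := by
      intro ω
      rw [sum_ite, sum_const_zero, add_zero, sum_const, nsmul_eq_mul,
        count_subsets_containing k hk ω]
    rw [sum_congr rfl fun ω _ => this ω, ← mul_sum, hsum, mul_one]
  have hmarkov : qmin * (F.card : ℝ) ≤ ((n - 1).choose (k - 1) : ℝ) := by
    rw [← htot]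
    calc qmin * (F.card : ℝ) = ∑ _s ∈ F, qmin := by rw [sum_const, nsmul_eq_mul, mul_comm]
    _ ≤ ∑ s ∈ F, ∑ ω ∈ s, P ω := sum_le_sum fun s hs => (mem_filter.1 hs).2
    _ ≤ ∑ s ∈ A, ∑ ω ∈ s, P ω := by
        apply sum_le_sum_of_subset_of_nonneg (filter_subset _ _)
        intro s _ _
        exact sum_nonneg fun ω _ => hP ω
  have hcardA : (A.card : ℝ) = (n.choose k : ℝ) := by
    rw [hA, card_powersetCard, card_univ]
  have hchoose_pos : 0 < (n.choose k : ℝ) := by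
    exact_mod_cast Nat.choose_pos hkn
  -- k * C(n,k) = n * C(n-1,k-1)
  have hkey : (k : ℝ) * (n.choose k : ℝ) = (n : ℝ) * ((n - 1).choose (k - 1) : ℝ) := by
    have hnat : k * n.choose k = n * (n - 1).choose (k - 1) := by
      obtain ⟨m, rfl⟩ : ∃ m, k = m + 1 := ⟨k - 1, (Nat.succ_pred_eq_of_pos hk).symm⟩
      obtain ⟨p, hp⟩ : ∃ p, n = p + 1 := ⟨n - 1, (Nat.succ_pred_eq_of_pos hn1).symm⟩
      rw [hp]
      simp only [Nat.add_sub_cancel]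
      rw [Nat.add_one_mul_choose_eq]
      exact (mul_comm _ _)
    exact_mod_cast hnat
  have hnpos : (0:ℝ) < n := by exact_mod_cast hn1
  rw [hcardA, div_le_div_iff₀ hchoose_pos hq, div_mul_eq_mul_div, le_div_iff₀ hnpos]
  calc (F.card : ℝ) * qmin * (n : ℝ) ≤ ((n - 1).choose (k - 1) : ℝ) * (n : ℝ) := by
        apply mul_le_mul_of_nonneg_right _ hnpos.le
        rw [mul_comm] at hmarkov; exact hmarkov
    _ = (k : ℝ) * (n.choose k : ℝ) := by rw [mul_comm, ← hkey]
end
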